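/- arXiv:1101.0011 — 7 statements merged into one kernel-verified Lean document; each statement's English description precedes it below -/
import Mathlib

section
/- Consider the 2×2 switch finite-horizon dynamic program (without idling). For every t ∈ {1,…,T} and every deviation vector d ∈ ℤ⁴, every configuration minimizing the instantaneous cost also achieves the dynamic-programming optimum: if v ∈ {v₁, v₂} satisfies Φ(d+v−x^t) ≤ Φ(d+v'−x^t) for the other configuration v', then V^t(d) = V^{t+1}(d+v−x^t) + Φ(d+v−x^t). In other words, the myopic (greedy) policy is optimal for the 2×2 switch. -/
open Finset

/-- The first complete configuration `v₁ = (1,0,0,1)` of a 2×2 switch. -/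
def v1 : Fin 4 → ℤ := ![1, 0, 0, 1]

/-- The second complete configuration `v₂ = (0,1,1,0)` of a 2×2 switch. -/
def v2 : Fin 4 → ℤ := ![0, 1, 1, 0]

/-- Discrete convexity of a function `φ : ℤ → ℝ`:
`φ(k) − φ(k−1) ≤ φ(k+1) − φ(k)` for every `k`. -/
def IntConvex (φ : ℤ → ℝ) : Prop :=
  ∀ k : ℤ, φ k - φ (k - 1) ≤ φ (k + 1) - φ k

/-!
With `e = v₁ − v₂`, the two successors `d + v₁ − x` and `d + v₂ − x` of `d` differ by `e`,
so a decision is a comparison of the cost-to-go at `b` and `b + e`. By backward induction,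
`Φ + Vᵗ` compares any two such points the way `Φ` does. The induction step rests on the
increment `g(a) = Φ(a + e) − Φ(a)`: the move `v₁ − xᵗ` can only increase it and the move
`v₂ − xᵗ` only decrease it, because each coordinate of these moves has the sign of the
corresponding coordinate of `e` (resp. `−e`) and `Φ` is separable convex.
-/

namespace IntConvex

variable {φ : ℤ → ℝ}

theorem monotone_sub (hφ : IntConvex φ) : Monotone fun k => φ (k + 1) - φ k :=
  monotone_int_of_le_succ fun k => by simpa using hφ (k + 1)

theorem unit_incr_le (hφ : IntConvex φ) {s c : ℤ} (hs : s = 1 ∨ s = -1) (hc : 0 ≤ s * c)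
    (k : ℤ) : φ (k + s) - φ k ≤ φ (k + c + s) - φ (k + c) := by
  rcases hs with rfl | rfl
  · exact hφ.monotone_sub (by linarith)
  · have := hφ.monotone_sub (show k + c - 1 ≤ k - 1 by linarith)
    simp only [sub_add_cancel] at this
    simp only [← sub_eq_add_neg]
    linarith

end IntConvex

theorem separable_incr_le {ι : Type*} [Fintype ι] {φ : ι → ℤ → ℝ} (hφ : ∀ i, IntConvex (φ i))
    {Φ : (ι → ℤ) → ℝ} (hΦ : ∀ d, Φ d = ∑ i, φ i (d i)) {e p : ι → ℤ}
    (he : ∀ i, e i = 1 ∨ e i = -1) (hp : ∀ i, 0 ≤ e i * p i) (a : ι → ℤ) :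
    Φ (a + e) - Φ a ≤ Φ (a + p + e) - Φ (a + p) := by
  simp only [hΦ, ← sum_sub_distrib]
  exact sum_le_sum fun i _ => (hφ i).unit_incr_le (he i) (hp i) (a i)

def OrderedLikeAlong {G : Type*} [AddCommGroup G] (Φ F : G → ℝ) (e : G) : Prop :=
  ∀ a, (Φ a ≤ Φ (a + e) → F a ≤ F (a + e)) ∧ (Φ (a + e) ≤ Φ a → F (a + e) ≤ F a)

namespace OrderedLikeAlong

variable {G : Type*} [AddCommGroup G] {Φ : G → ℝ} {e : G}

theorem refl : OrderedLikeAlong Φ Φ e := fun _ => ⟨id, id⟩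

theorem bellman_step {W : G → ℝ} {p q : G} (hpq : p = q + e)
    (hp : ∀ a, Φ (a + e) - Φ a ≤ Φ (a + p + e) - Φ (a + p))
    (hq : ∀ a, Φ (a + q + e) - Φ (a + q) ≤ Φ (a + e) - Φ a)
    (hW : OrderedLikeAlong Φ W e) :
    OrderedLikeAlong Φ (fun a => min (W (a + p)) (W (a + q)) + Φ a) e := by
  intro a
  have hqe : a + q + e = a + p := by rw [hpq, add_assoc]
  have hep : a + e + p = a + p + e := add_right_comm a e p
  have heq : a + e + q = a + p := by rw [add_right_comm, hqe]
  simp only [hep, heq]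
  constructor
  · intro h
    have hWp : W (a + p) ≤ W (a + p + e) := (hW (a + p)).1 (by linarith [hp a])
    rw [min_eq_right hWp]
    linarith [min_le_left (W (a + p)) (W (a + q))]
  · intro h
    have hWq : W (a + p) ≤ W (a + q) := hqe ▸ (hW (a + q)).2 (by linarith [hq a])
    rw [min_eq_left hWq]
    linarith [min_le_right (W (a + p + e)) (W (a + p))]

theorem value_add_cost {T : ℕ} {p q : ℕ → G} (hpq : ∀ s, p s = q s + e)
    (hp : ∀ s, 1 ≤ s → s ≤ T → ∀ a, Φ (a + e) - Φ a ≤ Φ (a + p s + e) - Φ (a + p s))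
    (hq : ∀ s, 1 ≤ s → s ≤ T → ∀ a, Φ (a + q s + e) - Φ (a + q s) ≤ Φ (a + e) - Φ a)
    {V : ℕ → G → ℝ} (hVT : ∀ d, V (T + 1) d = 0)
    (hV : ∀ s, 1 ≤ s → s ≤ T → ∀ d,
      V s d = min (V (s + 1) (d + p s) + Φ (d + p s)) (V (s + 1) (d + q s) + Φ (d + q s)))
    {s : ℕ} (hs1 : 1 ≤ s) (hsT : s ≤ T + 1) :
    OrderedLikeAlong Φ (V s + Φ) e := by
  refine Nat.decreasingInduction' (P := fun k => OrderedLikeAlong Φ (V k + Φ) e)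
    (fun k hkT hsk ih => ?_) hsT ?_
  · have hVk : V k = fun d => min ((V (k + 1) + Φ) (d + p k)) ((V (k + 1) + Φ) (d + q k)) :=
      funext (hV k (by omega) (by omega))
    rw [hVk]
    exact bellman_step (hpq k) (hp k (by omega) (by omega)) (hq k (by omega) (by omega)) ih
  · rw [show V (T + 1) + Φ = Φ from funext fun d => by simp [hVT]]
    exact refl

end OrderedLikeAlong

theorem v1_sub_v2_apply_eq_one_or_neg_one (i : Fin 4) : (v1 - v2) i = 1 ∨ (v1 - v2) i = -1 := by
  fin_cases i <;> simp [v1, v2]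

theorem switch_moves_aligned {x : Fin 4 → ℤ} (hx : ∀ i, x i = 0 ∨ x i = 1) (i : Fin 4) :
    0 ≤ (v1 - v2) i * (v1 - x) i ∧ 0 ≤ (v1 - v2) i * -(v2 - x) i := by
  fin_cases i <;> simp [v1, v2] <;> grind

theorem stmt0_general
    (T : ℕ)
    (φ : Fin 4 → ℤ → ℝ)
    (hconv : ∀ i, IntConvex (φ i))
    (x : ℕ → Fin 4 → ℤ)
    (hx : ∀ t, 1 ≤ t → t ≤ T → ∀ i, x t i = 0 ∨ x t i = 1)
    (Φ : (Fin 4 → ℤ) → ℝ)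
    (hΦ : ∀ d, Φ d = ∑ i, φ i (d i))
    (V : ℕ → (Fin 4 → ℤ) → ℝ)
    (hVT : ∀ d, V (T + 1) d = 0)
    (hV : ∀ t, 1 ≤ t → t ≤ T → ∀ d,
      V t d = min (V (t + 1) (d + v1 - x t) + Φ (d + v1 - x t))
                  (V (t + 1) (d + v2 - x t) + Φ (d + v2 - x t)))
    (t : ℕ) (ht1 : 1 ≤ t) (htT : t ≤ T)
    (d : Fin 4 → ℤ) (v v' : Fin 4 → ℤ)
    (hvv' : (v = v1 ∧ v' = v2) ∨ (v = v2 ∧ v' = v1))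
    (hmyopic : Φ (d + v - x t) ≤ Φ (d + v' - x t)) :
    V t d = V (t + 1) (d + v - x t) + Φ (d + v - x t) := by
  have hp s (hs1 : 1 ≤ s) (hsT : s ≤ T) (a) :=
    separable_incr_le hconv hΦ v1_sub_v2_apply_eq_one_or_neg_one
      (fun i => (switch_moves_aligned (hx s hs1 hsT) i).1) a
  have hq s (hs1 : 1 ≤ s) (hsT : s ≤ T) (a : Fin 4 → ℤ) :
      Φ (a + (v2 - x s) + (v1 - v2)) - Φ (a + (v2 - x s)) ≤ Φ (a + (v1 - v2)) - Φ a := by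
    simpa only [add_neg_cancel_right] using separable_incr_le (p := -(v2 - x s)) hconv hΦ
      v1_sub_v2_apply_eq_one_or_neg_one (fun i => (switch_moves_aligned (hx s hs1 hsT) i).2)
      (a + (v2 - x s))
  have hW := OrderedLikeAlong.value_add_cost (p := fun s => v1 - x s) (q := fun s => v2 - x s)
    (fun s => by abel) hp hq hVT (by simpa only [add_sub_assoc] using hV) (s := t + 1)
    (by omega) (by omega) (d + v2 - x t)
  have hv2e : d + v2 - x t + (v1 - v2) = d + v1 - x t := by abel
  rw [hv2e] at hW
  rw [hV t ht1 htT d]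
  rcases hvv' with ⟨rfl, rfl⟩ | ⟨rfl, rfl⟩
  · exact min_eq_left (hW.2 hmyopic)
  · exact min_eq_right (hW.1 hmyopic)

/-- **Myopic optimality for the 2×2 switch (Theorem 1).**
For the 2×2 switch finite-horizon dynamic program (without idling), in every time-slot
`1 ≤ t ≤ T` and every deviation vector `d`, any configuration `v ∈ {v₁, v₂}` minimizing the
instantaneous cost `Φ(d + v − xᵗ)` attains the dynamic-programming optimum. -/
theorem stmt0
    (T : ℕ)
    (φ : Fin 4 → ℤ → ℝ)
    (hconv : ∀ i, IntConvex (φ i))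
    (hnonneg : ∀ i k, 0 ≤ φ i k)
    (hzero : ∀ i, φ i 0 = 0)
    (hmono_neg : ∀ i, ∀ k : ℤ, k ≤ 0 → ∀ k' ≤ k, φ i k ≤ φ i k')
    (hmono_pos : ∀ i, ∀ k : ℤ, 0 ≤ k → ∀ k', k ≤ k' → φ i k ≤ φ i k')
    (x : ℕ → Fin 4 → ℤ)
    (hx : ∀ t, 1 ≤ t → t ≤ T → ∀ i, x t i = 0 ∨ x t i = 1)
    (Φ : (Fin 4 → ℤ) → ℝ)
    (hΦ : ∀ d, Φ d = ∑ i, φ i (d i))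
    (V : ℕ → (Fin 4 → ℤ) → ℝ)
    (hVT : ∀ d, V (T + 1) d = 0)
    (hV : ∀ t, 1 ≤ t → t ≤ T → ∀ d,
      V t d = min (V (t + 1) (d + v1 - x t) + Φ (d + v1 - x t))
                  (V (t + 1) (d + v2 - x t) + Φ (d + v2 - x t)))
    (t : ℕ) (ht1 : 1 ≤ t) (htT : t ≤ T)
    (d : Fin 4 → ℤ) (v v' : Fin 4 → ℤ)
    (hvv' : (v = v1 ∧ v' = v2) ∨ (v = v2 ∧ v' = v1))
    (hmyopic : Φ (d + v - x t) ≤ Φ (d + v' - x t)) :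
    V t d = V (t + 1) (d + v - x t) + Φ (d + v - x t) :=
  stmt0_general T φ hconv x hx Φ hΦ V hVT hV t ht1 htT d v v' hvv' hmyopic
end

section
/- Consider the 2×2 switch finite-horizon dynamic program (without idling). For every t ∈ {1,…,T+1} and every d ∈ ℤ⁴, V^t(d + v₁ − v₂) − V^t(d) ≥ V^t(d) − V^t(d − v₁ + v₂); that is, the value function is discretely convex along the direction v₁ − v₂. -/
open Finset

/-- min of a convex function and its shift is convex (pointwise form). -/
lemma min_shift_convex (g : (Fin 4 → ℤ) → ℝ) (e : Fin 4 → ℤ)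
    (hg : ∀ y, 2 * g y ≤ g (y + e) + g (y - e)) (a : Fin 4 → ℤ) :
    2 * min (g (a + e)) (g a) ≤
      min (g (a + e + e)) (g (a + e)) + min (g a) (g (a - e)) := by
  have h1 := hg a
  have h2 := hg (a + e)
  have ha : a + e - e = a := by abel
  rw [ha] at h2
  have m1 : min (g (a + e)) (g a) ≤ g (a + e) := min_le_left _ _
  have m2 : min (g (a + e)) (g a) ≤ g a := min_le_right _ _
  rcases le_total (g (a + e + e)) (g (a + e)) with h | h <;>
  rcases le_total (g a) (g (a - e)) with h' | h' <;>
  rcases le_total (g (a + e)) (g a) with h'' | h'' <;>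
    simp only [min_eq_left, min_eq_right, h, h', h''] <;> linarith

/-- **Auxiliary result 2.** For the 2×2 switch finite-horizon dynamic program
(without idling), for every `t ∈ {1,…,T+1}` and every `d ∈ ℤ⁴`,
`V^t(d + v₁ − v₂) − V^t(d) ≥ V^t(d) − V^t(d − v₁ + v₂)`:
the value function is discretely convex along the direction `v₁ − v₂`. -/
theorem stmt2
    (T : ℕ)
    (φ : Fin 4 → ℤ → ℝ)
    (hconv : ∀ i, IntConvex (φ i))
    (hnonneg : ∀ i k, 0 ≤ φ i k)
    (hzero : ∀ i, φ i 0 = 0)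
    (hmono_neg : ∀ i, ∀ k : ℤ, k ≤ 0 → ∀ k' ≤ k, φ i k ≤ φ i k')
    (hmono_pos : ∀ i, ∀ k : ℤ, 0 ≤ k → ∀ k', k ≤ k' → φ i k ≤ φ i k')
    (x : ℕ → Fin 4 → ℤ)
    (hx : ∀ t, 1 ≤ t → t ≤ T → ∀ i, x t i = 0 ∨ x t i = 1)
    (Φ : (Fin 4 → ℤ) → ℝ)
    (hΦ : ∀ d, Φ d = ∑ i, φ i (d i))
    (V : ℕ → (Fin 4 → ℤ) → ℝ)
    (hVT : ∀ d, V (T + 1) d = 0)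
    (hV : ∀ t, 1 ≤ t → t ≤ T → ∀ d,
      V t d = min (V (t + 1) (d + v1 - x t) + Φ (d + v1 - x t))
                  (V (t + 1) (d + v2 - x t) + Φ (d + v2 - x t))) :
    ∀ t, 1 ≤ t → t ≤ T + 1 → ∀ d : Fin 4 → ℤ,
      V t d - V t (d - v1 + v2) ≤ V t (d + v1 - v2) - V t d := by
  set e : Fin 4 → ℤ := v1 - v2 with he
  -- convexity of Φ along e
  have hΦconv : ∀ y : Fin 4 → ℤ, 2 * Φ y ≤ Φ (y + e) + Φ (y - e) := by
    intro y
    rw [hΦ, hΦ, hΦ, ← Finset.sum_add_distrib, Finset.mul_sum]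
    apply Finset.sum_le_sum
    intro i _
    have hei : e i = 1 ∨ e i = -1 := by
      fin_cases i <;> simp [he, v1, v2]
    simp only [Pi.add_apply, Pi.sub_apply]
    rcases hei with h | h
    · have hc := hconv i (y i)
      rw [h]; linarith
    · have hc := hconv i (y i)
      have e1 : y i + e i = y i - 1 := by rw [h]; ring
      have e2 : y i - e i = y i + 1 := by rw [h]; ring
      rw [e1, e2]
      linarith
  suffices H : ∀ k t, 1 ≤ t → t + k = T + 1 → ∀ d : Fin 4 → ℤ,
      2 * V t d ≤ V t (d + e) + V t (d - e) by
    intro t ht1 ht2 d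
    have h := H (T + 1 - t) t ht1 (by omega) d
    have h1 : d + v1 - v2 = d + e := by rw [he]; abel
    have h2 : d - v1 + v2 = d - e := by rw [he]; abel
    rw [h1, h2]
    linarith
  intro k
  induction k with
  | zero =>
    intro t ht1 ht2 d
    have : t = T + 1 := by omega
    subst this
    simp [hVT]
  | succ k ih =>
    intro t ht1 ht2 d
    have htT : t ≤ T := by omega
    have ihV : ∀ d : Fin 4 → ℤ, 2 * V (t + 1) d ≤ V (t + 1) (d + e) + V (t + 1) (d - e) := by
      intro d; exact ih (t + 1) (by omega) (by omega) d
    set W : (Fin 4 → ℤ) → ℝ := fun y => V (t + 1) y + Φ y with hW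
    have hWconv : ∀ y, 2 * W y ≤ W (y + e) + W (y - e) := by
      intro y
      have h1 := ihV y
      have h2 := hΦconv y
      simp only [hW]
      linarith
    set a : Fin 4 → ℤ := d + v2 - x t with ha
    have hVt : ∀ d' : Fin 4 → ℤ, V t d' = min (W (d' + v1 - x t)) (W (d' + v2 - x t)) := by
      intro d'; rw [hV t ht1 htT d']
    have e0 : d + v1 - x t = a + e := by rw [ha, he]; abel
    have e1 : d + e + v1 - x t = a + e + e := by rw [ha, he]; abel
    have e2 : d + e + v2 - x t = a + e := by rw [ha, he]; abel
    have e3 : d - e + v1 - x t = a := by rw [ha, he]; abel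
    have e4 : d - e + v2 - x t = a - e := by rw [ha, he]; abel
    rw [hVt d, hVt (d + e), hVt (d - e), e0, e1, e2, e3, e4, ← ha]
    exact min_shift_convex W e hWconv a
end

section
/- Consider the 2×2 switch finite-horizon dynamic program (without idling), with reachable states d_k^t = d⁰ + k·v₁ + (t−k)·v₂ − X^t for k = 0,…,t. For every t ∈ {1,…,T}, the decision function along reachable states is nondecreasing in k: γ^t(d_{k+1}^t) ≥ γ^t(d_k^t) for all 0 ≤ k ≤ t−1. Consequently the sign pattern of γ^t along the reachable states is a threshold rule: there do not exist indices k < k' with γ^t(d_k^t) > 0 and γ^t(d_{k'}^t) ≤ 0. -/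
open Finset

lemma intConvex_add {f g : ℤ → ℝ} (hf : IntConvex f) (hg : IntConvex g) :
    IntConvex (fun m => f m + g m) := fun k => by
  have h1 := hf k; have h2 := hg k; simp only []; linarith

lemma intConvex_comp_add {φ : ℤ → ℝ} (hf : IntConvex φ) (c : ℤ) :
    IntConvex (fun m => φ (c + m)) := fun k => by
  have h := hf (c + k)
  have e1 : c + (k - 1) = c + k - 1 := by ring
  have e2 : c + (k + 1) = c + k + 1 := by ring
  simp only [e1, e2]; exact h

lemma intConvex_comp_sub {φ : ℤ → ℝ} (hf : IntConvex φ) (c : ℤ) :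
    IntConvex (fun m => φ (c - m)) := fun k => by
  have h := hf (c - k)
  have e1 : c - (k - 1) = c - k + 1 := by ring
  have e2 : c - (k + 1) = c - k - 1 := by ring
  simp only [e1, e2]; linarith

lemma intConvex_min_shift {g : ℤ → ℝ} (hg : IntConvex g) :
    IntConvex (fun m => min (g m) (g (m + 1))) := fun k => by
  have h1 := hg k
  have h2 := hg (k + 1)
  rw [show k + 1 - 1 = k from by ring] at h2
  show min (g k) (g (k+1)) - min (g (k-1)) (g (k-1+1)) ≤
      min (g (k+1)) (g (k+1+1)) - min (g k) (g (k+1))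
  rw [show k - 1 + 1 = k from by ring]
  rcases min_cases (g (k-1)) (g k) with ⟨ha, ha'⟩ | ⟨ha, ha'⟩ <;>
  rcases min_cases (g k) (g (k+1)) with ⟨hb, hb'⟩ | ⟨hb, hb'⟩ <;>
  rcases min_cases (g (k+1)) (g (k+1+1)) with ⟨hc, hc'⟩ | ⟨hc, hc'⟩ <;>
  rw [ha, hb, hc] <;> linarith

/-- **Auxiliary result 3 (threshold structure).** For the 2×2 switch finite-horizon dynamic
program (without idling), with reachable states `d_k^t = d⁰ + k·v₁ + (t−k)·v₂ − X^t`
(`k = 0,…,t`), the decision function `γ^t` is nondecreasing in `k` along the reachable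
states; consequently its sign pattern is a threshold rule: there are no indices `k < k' ≤ t`
with `γ^t(d_k^t) > 0` and `γ^t(d_{k'}^t) ≤ 0`. -/
theorem stmt3
    (T : ℕ)
    (φ : Fin 4 → ℤ → ℝ)
    (hconv : ∀ i, IntConvex (φ i))
    (hnonneg : ∀ i k, 0 ≤ φ i k)
    (hzero : ∀ i, φ i 0 = 0)
    (hmono_neg : ∀ i, ∀ k : ℤ, k ≤ 0 → ∀ k' ≤ k, φ i k ≤ φ i k')
    (hmono_pos : ∀ i, ∀ k : ℤ, 0 ≤ k → ∀ k', k ≤ k' → φ i k ≤ φ i k')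
    (x : ℕ → Fin 4 → ℤ)
    (hx : ∀ t, 1 ≤ t → t ≤ T → ∀ i, x t i = 0 ∨ x t i = 1)
    (Φ : (Fin 4 → ℤ) → ℝ)
    (hΦ : ∀ d, Φ d = ∑ i, φ i (d i))
    (V : ℕ → (Fin 4 → ℤ) → ℝ)
    (hVT : ∀ d, V (T + 1) d = 0)
    (hV : ∀ t, 1 ≤ t → t ≤ T → ∀ d,
      V t d = min (V (t + 1) (d + v1 - x t) + Φ (d + v1 - x t))
                  (V (t + 1) (d + v2 - x t) + Φ (d + v2 - x t)))
    (Om : ℕ → (Fin 4 → ℤ) → ℝ)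
    (hOm : ∀ t d, Om t d = V t d + Φ d)
    (γ : ℕ → (Fin 4 → ℤ) → ℝ)
    (hγ : ∀ t d, γ t d = Om (t + 1) (d + v1 - x t) - Om (t + 1) (d + v2 - x t))
    (d0 : Fin 4 → ℤ)
    (X : ℕ → Fin 4 → ℤ)
    (hX : ∀ t, X t = ∑ τ ∈ Finset.Icc 1 t, x τ)
    (D : ℕ → ℕ → Fin 4 → ℤ)
    (hD : ∀ t k, D t k = d0 + k • v1 + (t - k) • v2 - X t)
    (t : ℕ) (ht1 : 1 ≤ t) (htT : t ≤ T) :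
    (∀ k : ℕ, k + 1 ≤ t → γ t (D t k) ≤ γ t (D t (k + 1))) ∧
    (∀ k k' : ℕ, k < k' → k' ≤ t → 0 < γ t (D t k) → 0 < γ t (D t k')) := by

  -- line direction e = v1 - v2
  have hline : ∀ (a : Fin 4 → ℤ) (m : ℤ),
      a + m • (v1 - v2) = ![a 0 + m, a 1 - m, a 2 - m, a 3 + m] := by
    intro a m
    funext i
    fin_cases i <;> simp [v1, v2] <;> ring
  have hΦconv : ∀ a : Fin 4 → ℤ, IntConvex (fun m : ℤ => Φ (a + m • (v1 - v2))) := by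
    intro a
    have heq : (fun m : ℤ => Φ (a + m • (v1 - v2))) =
        fun m : ℤ => (fun m => φ 0 (a 0 + m)) m +
          ((fun m => φ 1 (a 1 - m)) m +
            ((fun m => φ 2 (a 2 - m)) m + (fun m => φ 3 (a 3 + m)) m)) := by
      funext m
      rw [hline, hΦ, Fin.sum_univ_four]
      simp only [Matrix.cons_val_zero, Matrix.cons_val_one, Matrix.head_cons,
        Matrix.cons_val_two, Matrix.tail_cons, Matrix.cons_val_three]
      ring
    rw [heq]
    exact intConvex_add (intConvex_comp_add (hconv 0) (a 0))
      (intConvex_add (intConvex_comp_sub (hconv 1) (a 1))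
        (intConvex_add (intConvex_comp_sub (hconv 2) (a 2))
          (intConvex_comp_add (hconv 3) (a 3))))
  -- main induction: Om is convex along the direction v1 - v2
  have hkey : ∀ n : ℕ, n ≤ T →
      ∀ a : Fin 4 → ℤ, IntConvex (fun m : ℤ => Om (T + 1 - n) (a + m • (v1 - v2))) := by
    intro n
    induction n with
    | zero =>
      intro _ a
      have heq : (fun m : ℤ => Om (T + 1 - 0) (a + m • (v1 - v2))) =
          fun m : ℤ => Φ (a + m • (v1 - v2)) := by
        funext m
        rw [Nat.sub_zero, hOm, hVT]
        ring
      rw [heq]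
      exact hΦconv a
    | succ n ih =>
      intro hn a
      set s : ℕ := T + 1 - (n + 1) with hs
      have hs1 : 1 ≤ s := by omega
      have hsT : s ≤ T := by omega
      have hs2 : s + 1 = T + 1 - n := by omega
      have hG : IntConvex (fun m : ℤ => Om (s + 1) ((a + v2 - x s) + m • (v1 - v2))) := by
        rw [hs2]; exact ih (by omega) (a + v2 - x s)
      have heq : (fun m : ℤ => Om s (a + m • (v1 - v2))) =
          fun m : ℤ =>
            (fun m => min ((fun m => Om (s + 1) ((a + v2 - x s) + m • (v1 - v2))) m)
                ((fun m => Om (s + 1) ((a + v2 - x s) + m • (v1 - v2))) (m + 1))) m +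
            (fun m => Φ (a + m • (v1 - v2))) m := by
        funext m
        simp only
        rw [hOm, hV s hs1 hsT]
        have e1 : a + m • (v1 - v2) + v1 - x s = (a + v2 - x s) + (m + 1) • (v1 - v2) := by
          rw [add_smul, one_smul]; abel
        have e2 : a + m • (v1 - v2) + v2 - x s = (a + v2 - x s) + m • (v1 - v2) := by
          abel
        rw [e1, e2, ← hOm, ← hOm, min_comm]
      rw [heq]
      exact intConvex_add (intConvex_min_shift hG) (hΦconv a)
  -- reachable states lie on a line
  have hDk : ∀ k : ℕ, k ≤ t → D t k = D t 0 + (k : ℤ) • (v1 - v2) := by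
    intro k hk
    rw [hD, hD]
    funext i
    simp only [Pi.add_apply, Pi.sub_apply, Pi.smul_apply, Pi.mul_apply, smul_eq_mul,
      nsmul_eq_mul, zsmul_eq_mul, Pi.natCast_apply, Pi.intCast_apply]
    push_cast [Nat.cast_sub hk, Nat.sub_zero]
    ring
  -- γ along the line
  set b : Fin 4 → ℤ := D t 0 + v2 - x t with hb
  set F : ℤ → ℝ := fun m => Om (t + 1) (b + m • (v1 - v2)) with hF
  have hγk : ∀ k : ℕ, k ≤ t → γ t (D t k) = F ((k : ℤ) + 1) - F (k : ℤ) := by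
    intro k hk
    rw [hγ, hF]
    have e1 : D t k + v1 - x t = b + ((k : ℤ) + 1) • (v1 - v2) := by
      rw [hDk k hk, hb, add_smul, one_smul]; abel
    have e2 : D t k + v2 - x t = b + (k : ℤ) • (v1 - v2) := by
      rw [hDk k hk, hb]; abel
    rw [e1, e2]
  have hFconv : IntConvex F := by
    have hTt : T + 1 - (T - t) = t + 1 := by omega
    have := hkey (T - t) (Nat.sub_le T t) b
    rw [hTt] at this
    exact this
  have part1 : ∀ k : ℕ, k + 1 ≤ t → γ t (D t k) ≤ γ t (D t (k + 1)) := by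
    intro k hk
    rw [hγk k (by omega), hγk (k + 1) hk]
    have h := hFconv ((k : ℤ) + 1)
    rw [show (k : ℤ) + 1 - 1 = (k : ℤ) from by ring] at h
    push_cast
    linarith
  refine ⟨part1, ?_⟩
  intro k k' hkk hk't hpos
  have mono : ∀ j : ℕ, j ≤ t → k ≤ j → γ t (D t k) ≤ γ t (D t j) := by
    intro j
    induction j with
    | zero =>
      intro _ hk0
      have : k = 0 := Nat.le_zero.mp hk0
      subst this
      exact le_refl _
    | succ j ih =>
      intro hj hkj
      rcases Nat.eq_or_lt_of_le hkj with h | h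
      · rw [h]
      · exact le_trans (ih (by omega) (by omega)) (part1 j hj)
  exact lt_of_lt_of_le hpos (mono k' hk't (le_of_lt hkk))
end

section
/- Consider the 2×2 switch finite-horizon dynamic program (without idling), with reachable states d_k^t = d⁰ + k·v₁ + (t−k)·v₂ − X^t for k = 0,…,t. Fix t ∈ {1,…,T} and suppose k* ∈ {0,…,t} satisfies γ^t(d_k^t) ≤ 0 for all k ≤ k* and γ^t(d_k^t) > 0 for all k* < k ≤ t. Then the map k ↦ V^t(d_k^t) is nonincreasing for k ≤ k* and nondecreasing for k ≥ k*; in particular the minimum of V^t(d_k^t) over k ∈ {0,…,t} is attained at k = k*. -/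
open Finset

/-- **Auxiliary result 4.** For the 2×2 switch finite-horizon dynamic program (without
idling), with reachable states `d_k^t = d⁰ + k·v₁ + (t−k)·v₂ − X^t` (`k = 0,…,t`): if
`k* ∈ {0,…,t}` satisfies `γ^t(d_k^t) ≤ 0` for all `k ≤ k*` and `γ^t(d_k^t) > 0` for all
`k* < k ≤ t`, then `k ↦ V^t(d_k^t)` is nonincreasing for `k ≤ k*` and nondecreasing for
`k ≥ k*`; in particular its minimum over `k ∈ {0,…,t}` is attained at `k = k*`. -/
theorem stmt4
    (T : ℕ)
    (φ : Fin 4 → ℤ → ℝ)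
    (hconv : ∀ i, IntConvex (φ i))
    (hnonneg : ∀ i k, 0 ≤ φ i k)
    (hzero : ∀ i, φ i 0 = 0)
    (hmono_neg : ∀ i, ∀ k : ℤ, k ≤ 0 → ∀ k' ≤ k, φ i k ≤ φ i k')
    (hmono_pos : ∀ i, ∀ k : ℤ, 0 ≤ k → ∀ k', k ≤ k' → φ i k ≤ φ i k')
    (x : ℕ → Fin 4 → ℤ)
    (hx : ∀ t, 1 ≤ t → t ≤ T → ∀ i, x t i = 0 ∨ x t i = 1)
    (Φ : (Fin 4 → ℤ) → ℝ)
    (hΦ : ∀ d, Φ d = ∑ i, φ i (d i))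
    (V : ℕ → (Fin 4 → ℤ) → ℝ)
    (hVT : ∀ d, V (T + 1) d = 0)
    (hV : ∀ t, 1 ≤ t → t ≤ T → ∀ d,
      V t d = min (V (t + 1) (d + v1 - x t) + Φ (d + v1 - x t))
                  (V (t + 1) (d + v2 - x t) + Φ (d + v2 - x t)))
    (Om : ℕ → (Fin 4 → ℤ) → ℝ)
    (hOm : ∀ t d, Om t d = V t d + Φ d)
    (γ : ℕ → (Fin 4 → ℤ) → ℝ)
    (hγ : ∀ t d, γ t d = Om (t + 1) (d + v1 - x t) - Om (t + 1) (d + v2 - x t))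
    (d0 : Fin 4 → ℤ)
    (X : ℕ → Fin 4 → ℤ)
    (hX : ∀ t, X t = ∑ τ ∈ Finset.Icc 1 t, x τ)
    (D : ℕ → ℕ → Fin 4 → ℤ)
    (hD : ∀ t k, D t k = d0 + k • v1 + (t - k) • v2 - X t)
    (t : ℕ) (ht1 : 1 ≤ t) (htT : t ≤ T)
    (kstar : ℕ) (hks : kstar ≤ t)
    (hneg : ∀ k : ℕ, k ≤ kstar → γ t (D t k) ≤ 0)
    (hpos : ∀ k : ℕ, kstar < k → k ≤ t → 0 < γ t (D t k)) :
    (∀ k k' : ℕ, k ≤ k' → k' ≤ kstar → V t (D t k') ≤ V t (D t k)) ∧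
    (∀ k k' : ℕ, kstar ≤ k → k ≤ k' → k' ≤ t → V t (D t k) ≤ V t (D t k')) ∧
    (∀ k : ℕ, k ≤ t → V t (D t kstar) ≤ V t (D t k)) := by
 -- The key geometric fact: moving by `v1` from `D t k` equals moving by `v2` from `D t (k+1)`.
  have key : ∀ k : ℕ, k < t → D t k + v1 - x t = D t (k + 1) + v2 - x t := by
    intro k hk
    have h : t - k = (t - (k + 1)) + 1 := by omega
    rw [hD, hD, h]
    funext i
    simp only [Pi.add_apply, Pi.sub_apply, Pi.smul_apply, succ_nsmul, smul_eq_mul]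
    push_cast
    ring
  set A : ℕ → ℝ := fun k => Om (t + 1) (D t k + v1 - x t) with hA
  set B : ℕ → ℝ := fun k => Om (t + 1) (D t k + v2 - x t) with hB
  have hVk : ∀ k : ℕ, V t (D t k) = min (A k) (B k) := by
    intro k
    rw [hV t ht1 htT, hA, hB]
    simp only [hOm]
  have hAB : ∀ k : ℕ, k < t → A k = B (k + 1) := by
    intro k hk
    simp only [hA, hB, key k hk]
  have hγk : ∀ k : ℕ, γ t (D t k) = A k - B k := by
    intro k
    rw [hγ, hA, hB]
  have hstep1 : ∀ k : ℕ, k + 1 ≤ kstar → V t (D t (k + 1)) ≤ V t (D t k) := by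
    intro k hk
    have hkt : k < t := by omega
    have hAleB : A k ≤ B k := by
      have := hneg k (by omega)
      rw [hγk] at this; linarith
    rw [hVk, hVk]
    calc min (A (k + 1)) (B (k + 1)) ≤ B (k + 1) := min_le_right _ _
      _ = A k := (hAB k hkt).symm
      _ = min (A k) (B k) := (min_eq_left hAleB).symm
  have hstep2 : ∀ k : ℕ, kstar ≤ k → k + 1 ≤ t → V t (D t k) ≤ V t (D t (k + 1)) := by
    intro k hk hkt
    have hBlt : B (k + 1) < A (k + 1) := by
      have := hpos (k + 1) (by omega) (by omega)
      rw [hγk] at this; linarith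
    rw [hVk, hVk, min_eq_right hBlt.le]
    calc min (A k) (B k) ≤ A k := min_le_left _ _
      _ = B (k + 1) := hAB k (by omega)
  have part1 : ∀ k k' : ℕ, k ≤ k' → k' ≤ kstar → V t (D t k') ≤ V t (D t k) := by
    intro k k' hkk'
    induction k', hkk' using Nat.le_induction with
    | base => intro _; exact le_refl _
    | succ n hn ih =>
      intro h
      exact (hstep1 n h).trans (ih (by omega))
  have part2 : ∀ k k' : ℕ, kstar ≤ k → k ≤ k' → k' ≤ t → V t (D t k) ≤ V t (D t k') := by
    intro k k' hk hkk'
    induction k', hkk' using Nat.le_induction with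
    | base => intro _; exact le_refl _
    | succ n hn ih =>
      intro h
      exact (ih (by omega)).trans (hstep2 n (by omega) h)
  refine ⟨part1, part2, ?_⟩
  intro k hk
  rcases le_or_gt k kstar with h | h
  · exact part1 k kstar h le_rfl
  · exact part2 kstar k le_rfl h.le hk
end

section
/- Theorem (100% admissibility of MSL(ℓ)): Let N ≥ 1, ℓ ∈ ℕ, and let λ be an admissible i.i.d. load vector. Then for the deviation process (d^t) generated from d⁰ = 0 by any measurable MSL(ℓ) policy, liminf_{t→∞} E[d_q^t] > −∞ for every VOQ q ∈ Fin N × Fin N. -/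
/-!
Under MSL(ℓ) every entry of the deviation stays at most `ℓ + 1`, and the configuration served has
weight `⟨d, u⟩` within `N` of the least weight `min_π ⟨d, v_π⟩`. Admissibility gives `λ ≤ s D` for
a doubly stochastic `D` and some `s < 1` (pad `λ / s` to a doubly stochastic matrix, then apply
Birkhoff's theorem); putting the spare mass `1 - s` on a configuration through the most negative
entry of `d` yields the drift bound `min_π ⟨d, v_π⟩ - ⟨d, λ⟩ ≤ -c ‖d‖ + C`. As `‖d‖` moves by at
most `N` per slot, this turns `exp (θ ‖d‖)` into a geometric Lyapunov function:
`𝔼 exp (θ ‖dᵗ⁺¹‖) ≤ ρ 𝔼 exp (θ ‖dᵗ‖) + R` with `ρ < 1`. Hence the exponential moments, and with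
them `𝔼 ‖dᵗ‖ ≥ -𝔼 d_qᵗ`, are bounded uniformly in `t`. No conditional expectations are needed: all
one-step bounds are affine in the arrivals `xᵗ`, which are independent of `dᵗ`.
-/

open Finset MeasureTheory ProbabilityTheory

/-- The virtual output queues (VOQs) of an `N×N` input-queued switch, indexed by
input–output port pairs. -/
abbrev VOQ (N : ℕ) := Fin N × Fin N

/-- The complete configuration vector associated with a permutation `π` of the ports:
`v_π(i,j) = 1` if `j = π(i)` and `0` otherwise. -/
def confVec (N : ℕ) (π : Equiv.Perm (Fin N)) : VOQ N → ℤ :=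
  fun q => if q.2 = π q.1 then 1 else 0

/-- The standard (integer) inner product on `ℤ^{VOQ N}`. -/
def ipZ (N : ℕ) (a b : VOQ N → ℤ) : ℤ := ∑ q, a q * b q

section DoublyStochastic

variable {R n : Type*} [Field R] [LinearOrder R] [IsStrictOrderedRing R] [Fintype n]
  [DecidableEq n]

/-- The deficits `r i = 1 - ∑ⱼ M i j` and `c j = 1 - ∑ᵢ M i j` have the same total `s`, so
`M + r cᵀ / s` is doubly stochastic. -/
theorem Matrix.exists_mem_doublyStochastic_le {M : Matrix n n R} (h0 : ∀ i j, 0 ≤ M i j)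
    (hrow : ∀ i, ∑ j, M i j ≤ 1) (hcol : ∀ j, ∑ i, M i j ≤ 1) :
    ∃ D ∈ doublyStochastic R n, ∀ i j, M i j ≤ D i j := by
  set r : n → R := fun i => 1 - ∑ j, M i j
  set c : n → R := fun j => 1 - ∑ i, M i j
  have hr : ∀ i, 0 ≤ r i := fun i => sub_nonneg.2 (hrow i)
  have hc : ∀ j, 0 ≤ c j := fun j => sub_nonneg.2 (hcol j)
  have hrc : ∑ i, r i = ∑ j, c j := by
    simp only [r, c, sum_sub_distrib, sum_comm (f := fun i j => M i j)]
  by_cases hs : ∑ j, c j = 0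
  · have hr0 : ∀ i, r i = 0 := fun i =>
      (sum_eq_zero_iff_of_nonneg fun i _ => hr i).1 (hrc.trans hs) i (mem_univ i)
    have hc0 : ∀ j, c j = 0 := fun j =>
      (sum_eq_zero_iff_of_nonneg fun j _ => hc j).1 hs j (mem_univ j)
    refine ⟨M, mem_doublyStochastic_iff_sum.2 ⟨h0, fun i => ?_, fun j => ?_⟩, fun i j => le_rfl⟩
    · linarith [hr0 i]
    · linarith [hc0 j]
  have hcorr : ∀ i j, 0 ≤ r i * c j / ∑ j, c j := fun i j =>
    div_nonneg (mul_nonneg (hr i) (hc j)) (sum_nonneg fun j _ => hc j)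
  refine ⟨M + Matrix.of fun i j => r i * c j / ∑ j, c j,
    mem_doublyStochastic_iff_sum.2 ⟨fun i j => ?_, fun i => ?_, fun j => ?_⟩, fun i j => ?_⟩
  · simpa using add_nonneg (h0 i j) (hcorr i j)
  · simp only [Matrix.add_apply, Matrix.of_apply, sum_add_distrib, ← sum_div, ← mul_sum]
    rw [mul_div_cancel_right₀ _ hs]
    ring
  · simp only [Matrix.add_apply, Matrix.of_apply, sum_add_distrib, ← sum_div, ← sum_mul, hrc]
    rw [mul_div_cancel_left₀ _ hs]
    ring
  · simpa using hcorr i j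

end DoublyStochastic

/-- Second-order bound `exp z ≤ 1 + z + z²` at `z = θ (Y' - Y)`, where
`2 Y (Y' - Y) ≤ Y'² - Y² ≤ s`. -/
lemma exp_mul_le_of_sq_le {θ b Y Y' s : ℝ} (hθ : 0 < θ) (hθb : θ * b ≤ 1) (hY : 0 < Y)
    (hstep : |Y' - Y| ≤ b) (hsq : Y' ^ 2 ≤ Y ^ 2 + s) :
    Real.exp (θ * Y') ≤ Real.exp (θ * Y) * (1 + θ ^ 2 * b ^ 2 + θ * s / (2 * Y)) := by
  set z := θ * (Y' - Y) with hz_def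
  have hz : |z| ≤ 1 := by
    rw [abs_mul, abs_of_pos hθ]
    nlinarith [abs_nonneg (Y' - Y)]
  have hz2 : z ^ 2 ≤ θ ^ 2 * b ^ 2 := by
    rw [mul_pow]
    exact mul_le_mul_of_nonneg_left (sq_le_sq' (abs_le.1 hstep).1 (abs_le.1 hstep).2)
      (sq_nonneg θ)
  have hzs : z ≤ θ * s / (2 * Y) := by
    rw [le_div_iff₀ (by positivity)]
    nlinarith [sq_nonneg (Y' - Y)]
  have hexp : Real.exp z ≤ 1 + z + z ^ 2 := by
    linarith [(abs_le.1 (Real.abs_exp_sub_one_sub_id_le hz)).2]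
  calc Real.exp (θ * Y') = Real.exp (θ * Y) * Real.exp z := by rw [← Real.exp_add, hz_def]; ring_nf
    _ ≤ _ := mul_le_mul_of_nonneg_left (by linarith) (Real.exp_pos _).le

lemma le_max_div_of_le_mul_add {a : ℕ → ℝ} {ρ R : ℝ} (hρ0 : 0 ≤ ρ) (hρ1 : ρ < 1)
    (h : ∀ t, a (t + 1) ≤ ρ * a t + R) (t : ℕ) : a t ≤ max (a 0) (R / (1 - ρ)) := by
  induction t with
  | zero => exact le_max_left _ _
  | succ t ih =>
    have hR : R ≤ (1 - ρ) * max (a 0) (R / (1 - ρ)) :=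
      (div_le_iff₀' (by linarith)).1 (le_max_right _ _)
    nlinarith [mul_le_mul_of_nonneg_left ih hρ0, h t]

namespace MSL

variable {N ℓ : ℕ} {u : (VOQ N → ℤ) → (VOQ N → ℤ) → (VOQ N → ℤ)}

lemma confVec_eq_zero_or_one (π : Equiv.Perm (Fin N)) (q : VOQ N) :
    confVec N π q = 0 ∨ confVec N π q = 1 := by
  unfold confVec; split_ifs <;> simp

lemma sum_confVec (π : Equiv.Perm (Fin N)) : ∑ q, confVec N π q = N := by
  unfold confVec
  rw [Fintype.sum_prod_type]
  simp

lemma ipZ_confVec (dv : VOQ N → ℤ) (π : Equiv.Perm (Fin N)) :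
    ipZ N dv (confVec N π) = ∑ i, dv (i, π i) := by
  simp [ipZ, confVec, Fintype.sum_prod_type, mul_ite]

def IsZeroOne (v : VOQ N → ℤ) : Prop := ∀ q, v q = 0 ∨ v q = 1

def IsMSLPolicy (N ℓ : ℕ) (u : (VOQ N → ℤ) → (VOQ N → ℤ) → (VOQ N → ℤ)) : Prop :=
  ∀ dv xv : VOQ N → ℤ, ∃ π : Equiv.Perm (Fin N),
    (∀ π' : Equiv.Perm (Fin N),
      ipZ N (dv - xv) (confVec N π) ≤ ipZ N (dv - xv) (confVec N π')) ∧
    u dv xv = fun q => if (ℓ : ℤ) ≤ dv q - xv q then 0 else confVec N π q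

def step (u : (VOQ N → ℤ) → (VOQ N → ℤ) → (VOQ N → ℤ)) (dv xv : VOQ N → ℤ) : VOQ N → ℤ :=
  dv + u dv xv - xv

namespace IsMSLPolicy

variable {dv xv : VOQ N → ℤ}

lemma isZeroOne (hu : IsMSLPolicy N ℓ u) (dv xv : VOQ N → ℤ) : IsZeroOne (u dv xv) := by
  intro q
  obtain ⟨π, -, hform⟩ := hu dv xv
  rw [hform]
  dsimp only
  split_ifs
  · exact Or.inl rfl
  · exact confVec_eq_zero_or_one π q

/-- Dropping `v_π` where `d - x ≥ ℓ ≥ 0` can only lower `⟨d - x, ·⟩`, and `⟨x, u⟩ ≤ ∑ u ≤ N`. -/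
lemma ipZ_le (hu : IsMSLPolicy N ℓ u) (hx : IsZeroOne xv) (π' : Equiv.Perm (Fin N)) :
    ipZ N dv (u dv xv) ≤ ipZ N dv (confVec N π') + N := by
  obtain ⟨π, hmin, hform⟩ := hu dv xv
  have hserved : ∀ q, dv q * u dv xv q ≤ (dv - xv) q * confVec N π q + confVec N π q := by
    intro q
    rw [hform, Pi.sub_apply]
    rcases hx q with h | h <;> rcases confVec_eq_zero_or_one π q with h' | h' <;>
      simp only [h, h'] <;> split_ifs <;> omega
  have hunserved : ∀ q, (dv - xv) q * confVec N π' q ≤ dv q * confVec N π' q := by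
    intro q
    rw [Pi.sub_apply]
    rcases hx q with h | h <;> rcases confVec_eq_zero_or_one π' q with h' | h' <;>
      simp only [h, h'] <;> omega
  calc ipZ N dv (u dv xv) ≤ ipZ N (dv - xv) (confVec N π) + N := by
        rw [← sum_confVec π, ipZ, ipZ, ← sum_add_distrib]
        exact sum_le_sum fun q _ => hserved q
    _ ≤ ipZ N (dv - xv) (confVec N π') + N := by grw [hmin π']
    _ ≤ ipZ N dv (confVec N π') + N := by
        grw [show ipZ N (dv - xv) (confVec N π') ≤ ipZ N dv (confVec N π') from
          sum_le_sum fun q _ => hunserved q]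

lemma step_le (hu : IsMSLPolicy N ℓ u) (hx : IsZeroOne xv) (hd : ∀ q, dv q ≤ ℓ + 1)
    (q : VOQ N) : step u dv xv q ≤ ℓ + 1 := by
  obtain ⟨π, -, hform⟩ := hu dv xv
  have := hd q
  simp only [step, Pi.add_apply, Pi.sub_apply, hform]
  rcases hx q with h | h <;> rcases confVec_eq_zero_or_one π q with h' | h' <;>
    simp only [h, h'] <;> split_ifs <;> omega

end IsMSLPolicy

def euclidean (dv : VOQ N → ℤ) : EuclideanSpace ℝ (VOQ N) :=
  WithLp.toLp 2 fun q => (dv q : ℝ)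

@[simp]
lemma euclidean_apply (dv : VOQ N → ℤ) (q : VOQ N) : euclidean dv q = dv q := rfl

lemma euclidean_sub (dv dv' : VOQ N → ℤ) :
    euclidean (dv - dv') = euclidean dv - euclidean dv' := by
  ext q; simp

lemma norm_euclidean_sq (dv : VOQ N → ℤ) : ‖euclidean dv‖ ^ 2 = ∑ q, (dv q : ℝ) ^ 2 := by
  simp [EuclideanSpace.real_norm_sq_eq]

lemma abs_le_norm_euclidean (dv : VOQ N → ℤ) (q : VOQ N) : |(dv q : ℝ)| ≤ ‖euclidean dv‖ := by
  simpa using PiLp.norm_apply_le (euclidean dv) q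

lemma sum_const_eq_sq_mul (c : ℝ) : ∑ _q : VOQ N, c = N ^ 2 * c := by
  simp [Fintype.card_prod, sq]

lemma norm_euclidean_le {dv : VOQ N → ℤ} {B : ℝ} (hB : 0 ≤ B) (h : ∀ q, |(dv q : ℝ)| ≤ B) :
    ‖euclidean dv‖ ≤ N * B := by
  refine (pow_le_pow_iff_left₀ (norm_nonneg _) (by positivity) two_ne_zero).1 ?_
  calc ‖euclidean dv‖ ^ 2 = ∑ q, (dv q : ℝ) ^ 2 := norm_euclidean_sq dv
    _ ≤ ∑ _q : VOQ N, B ^ 2 := sum_le_sum fun q _ => sq_le_sq' (abs_le.1 (h q)).1 (abs_le.1 (h q)).2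
    _ = (N * B) ^ 2 := by rw [sum_const_eq_sq_mul]; ring

lemma abs_norm_euclidean_sub_le {dv dv' : VOQ N → ℤ} (h : ∀ q, |dv' q - dv q| ≤ 1) :
    |‖euclidean dv'‖ - ‖euclidean dv‖| ≤ N := by
  calc |‖euclidean dv'‖ - ‖euclidean dv‖| ≤ ‖euclidean (dv' - dv)‖ := by
        rw [euclidean_sub]; exact abs_norm_sub_norm_le _ _
    _ ≤ N * 1 := norm_euclidean_le zero_le_one fun q => by exact_mod_cast h q
    _ = N := mul_one _

lemma norm_euclidean_add_sq_le (dv : VOQ N → ℤ) {w : VOQ N → ℤ} (h : ∀ q, |w q| ≤ 1) :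
    ‖euclidean (dv + w)‖ ^ 2 ≤ ‖euclidean dv‖ ^ 2 + 2 * ∑ q, (dv q : ℝ) * w q + N ^ 2 := by
  have hw : ∑ q, (w q : ℝ) ^ 2 ≤ N ^ 2 := by
    calc ∑ q, (w q : ℝ) ^ 2 ≤ ∑ _q : VOQ N, (1 : ℝ) :=
          sum_le_sum fun q _ => (sq_le_one_iff_abs_le_one _).2 (by exact_mod_cast h q)
      _ = N ^ 2 := by rw [sum_const_eq_sq_mul, mul_one]
  have hexpand : ∑ q, ((dv + w) q : ℝ) ^ 2
      = ∑ q, (dv q : ℝ) ^ 2 + 2 * ∑ q, (dv q : ℝ) * w q + ∑ q, (w q : ℝ) ^ 2 := by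
    simp only [Pi.add_apply, Int.cast_add, add_sq, sum_add_distrib, mul_sum, mul_assoc]
  rw [norm_euclidean_sq, norm_euclidean_sq, hexpand]
  linarith

/-- `∑ i, d (i, π i)` is `⟨d, v_π⟩`. -/
noncomputable def minWeight (dv : VOQ N → ℤ) : ℝ :=
  ⨅ π : Equiv.Perm (Fin N), ∑ i, (dv (i, π i) : ℝ)

lemma minWeight_le (dv : VOQ N → ℤ) (π : Equiv.Perm (Fin N)) :
    minWeight dv ≤ ∑ i, (dv (i, π i) : ℝ) :=
  ciInf_le (Set.finite_range _).bddBelow π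

namespace IsMSLPolicy

variable {dv xv : VOQ N → ℤ}

lemma abs_service_sub_arrival_le (hu : IsMSLPolicy N ℓ u) (hx : IsZeroOne xv) (q : VOQ N) :
    |(u dv xv - xv) q| ≤ 1 := by
  rw [Pi.sub_apply, abs_le]
  rcases hu.isZeroOne dv xv q with h | h <;> rcases hx q with h' | h' <;> omega

lemma abs_norm_step_sub_le (hu : IsMSLPolicy N ℓ u) (hx : IsZeroOne xv) :
    |‖euclidean (step u dv xv)‖ - ‖euclidean dv‖| ≤ N :=
  abs_norm_euclidean_sub_le fun q => by
    simpa [step, add_sub_assoc] using hu.abs_service_sub_arrival_le (dv := dv) hx q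

lemma sum_mul_le_minWeight_add (hu : IsMSLPolicy N ℓ u) (hx : IsZeroOne xv) :
    ∑ q, (dv q : ℝ) * u dv xv q ≤ minWeight dv + N := by
  rw [← sub_le_iff_le_add]
  refine le_ciInf fun π => ?_
  rw [sub_le_iff_le_add]
  have := hu.ipZ_le (dv := dv) hx π
  rw [ipZ_confVec, ipZ] at this
  exact_mod_cast this

lemma norm_step_sq_le (hu : IsMSLPolicy N ℓ u) (hx : IsZeroOne xv) :
    ‖euclidean (step u dv xv)‖ ^ 2
      ≤ ‖euclidean dv‖ ^ 2 + 2 * (minWeight dv - ∑ q, (dv q : ℝ) * xv q) + (2 * N + N ^ 2) := by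
  have hsq := norm_euclidean_add_sq_le dv (hu.abs_service_sub_arrival_le (dv := dv) hx)
  have hsplit : ∑ q, (dv q : ℝ) * ((u dv xv - xv) q : ℤ)
      = ∑ q, (dv q : ℝ) * u dv xv q - ∑ q, (dv q : ℝ) * xv q := by
    simp only [Pi.sub_apply, Int.cast_sub, mul_sub, sum_sub_distrib]
  rw [step, add_sub_assoc]
  linarith [hu.sum_mul_le_minWeight_add (dv := dv) hx]

end IsMSLPolicy

open Filter Topology in
lemma exists_lt_one_le_mul_doublyStochastic {lam : VOQ N → ℝ} (hlam : ∀ q, 0 ≤ lam q)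
    (hrow : ∀ i, ∑ j, lam (i, j) < 1) (hcol : ∀ j, ∑ i, lam (i, j) < 1) :
    ∃ s, 0 < s ∧ s < 1 ∧ ∃ D ∈ doublyStochastic ℝ (Fin N), ∀ i j, lam (i, j) ≤ s * D i j := by
  obtain ⟨s, ⟨⟨hrow_s, hcol_s⟩, hs0⟩, hs1⟩ : ∃ s : ℝ, (((∀ i, ∑ j, lam (i, j) < s) ∧
      ∀ j, ∑ i, lam (i, j) < s) ∧ 0 < s) ∧ s < 1 := by
    refine (Eventually.and (nhdsWithin_le_nhds ?_) self_mem_nhdsWithin).exists (f := 𝓝[<] 1)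
    exact ((eventually_all.2 fun i => eventually_gt_nhds (hrow i)).and
      (eventually_all.2 fun j => eventually_gt_nhds (hcol j))).and (eventually_gt_nhds one_pos)
  obtain ⟨D, hD, hMD⟩ := Matrix.exists_mem_doublyStochastic_le (M := fun i j => lam (i, j) / s)
    (fun i j => div_nonneg (hlam _) hs0.le)
    (fun i => by rw [← sum_div, div_le_one hs0]; exact (hrow_s i).le)
    (fun j => by rw [← sum_div, div_le_one hs0]; exact (hcol_s j).le)
  exact ⟨s, hs0, hs1, D, hD, fun i j => (div_le_iff₀' hs0).1 (hMD i j)⟩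

lemma minWeight_le_sum_mul_of_mem_doublyStochastic (dv : VOQ N → ℤ)
    {D : Matrix (Fin N) (Fin N) ℝ} (hD : D ∈ doublyStochastic ℝ (Fin N)) :
    minWeight dv ≤ ∑ q : VOQ N, (dv q : ℝ) * D q.1 q.2 := by
  obtain ⟨w, hw0, hw1, rfl⟩ := exists_eq_sum_perm_of_mem_doublyStochastic hD
  have hperm : ∀ σ : Equiv.Perm (Fin N),
      ∑ q : VOQ N, (dv q : ℝ) * σ.permMatrix ℝ q.1 q.2 = ∑ i, (dv (i, σ i) : ℝ) := by
    intro σ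
    simp [Fintype.sum_prod_type, Equiv.Perm.permMatrix, PEquiv.toMatrix_apply]
  calc minWeight dv = ∑ σ, w σ * minWeight dv := by rw [← sum_mul, hw1, one_mul]
    _ ≤ ∑ σ, w σ * ∑ i, (dv (i, σ i) : ℝ) :=
        sum_le_sum fun σ _ => mul_le_mul_of_nonneg_left (minWeight_le dv σ) (hw0 σ)
    _ = ∑ q : VOQ N, (dv q : ℝ) * (∑ σ, w σ • σ.permMatrix ℝ) q.1 q.2 := by
        simp only [← hperm, Matrix.sum_apply, Matrix.smul_apply, smul_eq_mul, mul_sum]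
        rw [sum_comm]
        exact sum_congr rfl fun q _ => sum_congr rfl fun σ _ => by ring

lemma minWeight_le_add {dv : VOQ N → ℤ} {L : ℝ} (hL : 0 ≤ L) (hd : ∀ q, (dv q : ℝ) ≤ L)
    (q : VOQ N) : minWeight dv ≤ dv q + N * L := by
  set π := Equiv.swap q.1 q.2
  calc minWeight dv ≤ ∑ i, (dv (i, π i) : ℝ) := minWeight_le dv π
    _ = dv q + ∑ i ∈ univ.erase q.1, (dv (i, π i) : ℝ) := by
        rw [← add_sum_erase _ _ (mem_univ q.1), Equiv.swap_apply_left]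
    _ ≤ dv q + ∑ _i ∈ univ.erase q.1, L := by grw [sum_le_sum fun i _ => hd (i, π i)]
    _ ≤ dv q + ∑ _i : Fin N, L := by
        grw [sum_le_sum_of_subset_of_nonneg (erase_subset q.1 univ) fun _ _ _ => hL]
    _ = dv q + N * L := by simp

lemma exists_le_sub_norm_div {dv : VOQ N → ℤ} {L : ℝ} (hN : 0 < N) (hL : 0 ≤ L)
    (hd : ∀ q, (dv q : ℝ) ≤ L) : ∃ q, (dv q : ℝ) ≤ 2 * L - ‖euclidean dv‖ / N := by
  have : Nonempty (VOQ N) := ⟨(⟨0, hN⟩, ⟨0, hN⟩)⟩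
  obtain ⟨q₀, hq₀⟩ := Finite.exists_min fun q => (dv q : ℝ)
  have hnorm : ‖euclidean dv‖ ≤ N * (2 * L - dv q₀) :=
    norm_euclidean_le (by linarith [hd q₀]) fun q =>
      abs_le.2 ⟨by linarith [hq₀ q, hd q₀], by linarith [hd q, hd q₀]⟩
  have hdiv : ‖euclidean dv‖ / N ≤ 2 * L - dv q₀ :=
    (div_le_iff₀ (by exact_mod_cast hN)).2 (by linarith)
  exact ⟨q₀, by linarith⟩

theorem exists_minWeight_sub_le {lam : VOQ N → ℝ} (hN : 0 < N) (hlam : ∀ q, 0 ≤ lam q)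
    (hrow : ∀ i, ∑ j, lam (i, j) < 1) (hcol : ∀ j, ∑ i, lam (i, j) < 1) {L : ℝ} (hL : 0 ≤ L) :
    ∃ c, 0 < c ∧ c ≤ 1 ∧ ∃ C, ∀ dv : VOQ N → ℤ, (∀ q, (dv q : ℝ) ≤ L) →
      minWeight dv - ∑ q, (dv q : ℝ) * lam q ≤ -c * ‖euclidean dv‖ + C := by
  obtain ⟨s, hs0, hs1, D, hD, hlamD⟩ := exists_lt_one_le_mul_doublyStochastic hlam hrow hcol
  have hNpos : (0 : ℝ) < N := by exact_mod_cast hN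
  refine ⟨(1 - s) / N, div_pos (by linarith) hNpos,
    (div_le_one hNpos).2 (by linarith [(Nat.one_le_cast (α := ℝ)).2 hN]), 2 * L + 2 * N * L,
    fun dv hd => ?_⟩
  obtain ⟨q, hq⟩ := exists_le_sub_norm_div hN hL hd
  have hsumD : ∑ q : VOQ N, D q.1 q.2 = N := by
    simp [Fintype.sum_prod_type, sum_row_of_mem_doublyStochastic hD]
  have hconv : minWeight dv ≤ (1 - s) * (dv q + N * L) + s * ∑ q, (dv q : ℝ) * D q.1 q.2 := by
    have h1 := minWeight_le_add hL hd q
    have h2 := minWeight_le_sum_mul_of_mem_doublyStochastic dv hD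
    nlinarith
  have hslack : s * ∑ q, (dv q : ℝ) * D q.1 q.2 - ∑ q, (dv q : ℝ) * lam q ≤ N * L := by
    calc s * ∑ q, (dv q : ℝ) * D q.1 q.2 - ∑ q, (dv q : ℝ) * lam q
        = ∑ q, (dv q : ℝ) * (s * D q.1 q.2 - lam q) := by
          rw [mul_sum, ← sum_sub_distrib]
          exact sum_congr rfl fun q _ => by ring
      _ ≤ ∑ q : VOQ N, L * (s * D q.1 q.2) := sum_le_sum fun q _ => by
          nlinarith [mul_le_mul_of_nonneg_right (hd q) (sub_nonneg.2 (hlamD q.1 q.2)),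
            mul_nonneg hL (hlam q)]
      _ = s * (N * L) := by rw [← mul_sum, ← mul_sum, hsumD]; ring
      _ ≤ N * L := by nlinarith [mul_nonneg hNpos.le hL]
  have h1 : (1 - s) * (dv q : ℝ) ≤ (1 - s) * (2 * L - ‖euclidean dv‖ / N) :=
    mul_le_mul_of_nonneg_left hq (by linarith)
  have h2 : -((1 - s) / N) * ‖euclidean dv‖ = (1 - s) * -(‖euclidean dv‖ / N) := by ring
  nlinarith [mul_nonneg hs0.le hL, mul_nonneg hs0.le (mul_nonneg hNpos.le hL)]

namespace IsMSLPolicy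

lemma exists_affine_bound (hu : IsMSLPolicy N ℓ u) {lam : VOQ N → ℝ} {c C θ ρ K : ℝ}
    (hc : 0 < c) (hθ : 0 < θ) (hθN : θ * N ≤ 1) (hρ : 1 + θ ^ 2 * N ^ 2 - θ * c / 2 ≤ ρ)
    (hρ0 : 0 ≤ ρ) (hK : 0 < K) (hCK : 2 * C + 2 * N + N ^ 2 ≤ c * K) (dv : VOQ N → ℤ)
    (hdrift : minWeight dv - ∑ q, (dv q : ℝ) * lam q ≤ -c * ‖euclidean dv‖ + C) :
    ∃ (a : ℝ) (b : VOQ N → ℝ),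
      (∀ xv, IsZeroOne xv → Real.exp (θ * ‖euclidean (step u dv xv)‖) ≤ a + ∑ q, b q * xv q) ∧
      a + ∑ q, b q * lam q ≤ ρ * Real.exp (θ * ‖euclidean dv‖) + Real.exp (θ * (K + N)) := by
  set Y := ‖euclidean dv‖
  by_cases hY : K ≤ Y
  · have hY0 : 0 < Y := hK.trans_le hY
    set E := Real.exp (θ * Y)
    set F : ℝ → ℝ := fun S =>
      E * (1 + θ ^ 2 * N ^ 2 + θ * (2 * (minWeight dv - S) + (2 * N + N ^ 2)) / (2 * Y))
    have haff : ∀ v : VOQ N → ℝ,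
        F 0 + ∑ q, -(E * θ / Y) * dv q * v q = F (∑ q, dv q * v q) := by
      intro v
      simp only [F, mul_assoc, ← mul_sum]
      field_simp
      ring
    refine ⟨F 0, fun q => -(E * θ / Y) * dv q, fun xv hx => ?_, ?_⟩
    · rw [haff]
      exact exp_mul_le_of_sq_le hθ hθN hY0 (hu.abs_norm_step_sub_le hx)
        ((hu.norm_step_sq_le hx).trans_eq (add_assoc _ _ _))
    · rw [haff]
      have hneg : θ * (2 * (minWeight dv - ∑ q, dv q * lam q) + (2 * N + N ^ 2)) / (2 * Y)
          ≤ -(θ * c / 2) := by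
        rw [div_le_iff₀ (by positivity)]
        nlinarith [mul_le_mul_of_nonneg_left hY hc.le]
      have hE : 0 < E := Real.exp_pos _
      nlinarith [Real.exp_pos (θ * (K + N))]
  · refine ⟨Real.exp (θ * (K + N)), 0, fun xv hx => ?_, ?_⟩
    · simp only [Pi.zero_apply, zero_mul, sum_const_zero, add_zero]
      gcongr
      linarith [(abs_le.1 (hu.abs_norm_step_sub_le (dv := dv) hx)).2]
    · simp only [Pi.zero_apply, zero_mul, sum_const_zero, add_zero, le_add_iff_nonneg_left]
      positivity

end IsMSLPolicy

def run (u : (VOQ N → ℤ) → (VOQ N → ℤ) → (VOQ N → ℤ)) (y : ℕ → VOQ N → ℤ) :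
    ℕ → VOQ N → ℤ
  | 0 => 0
  | t + 1 => step u (run u y t) (y t)

lemma run_congr {y y' : ℕ → VOQ N → ℤ} {t : ℕ} (h : ∀ s < t, y s = y' s) :
    run u y t = run u y' t := by
  induction t with
  | zero => rfl
  | succ t ih =>
    simp only [run, ih fun s hs => h s (hs.trans t.lt_succ_self), h t t.lt_succ_self]

lemma abs_run_le (hu : ∀ dv xv, IsZeroOne (u dv xv)) {y : ℕ → VOQ N → ℤ}
    (hy : ∀ s, IsZeroOne (y s)) (t : ℕ) (q : VOQ N) : |run u y t q| ≤ t := by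
  induction t with
  | zero => simp [run]
  | succ t ih =>
    rw [abs_le] at ih ⊢
    rcases hu (run u y t) (y t) q with h | h <;> rcases hy t q with h' | h' <;>
      simp only [run, step, Pi.add_apply, Pi.sub_apply, h, h'] <;> push_cast <;> omega

lemma IsMSLPolicy.run_le (hu : IsMSLPolicy N ℓ u) {y : ℕ → VOQ N → ℤ}
    (hy : ∀ s, IsZeroOne (y s)) (t : ℕ) (q : VOQ N) : run u y t q ≤ ℓ + 1 := by
  induction t generalizing q with
  | zero => simp only [run, Pi.zero_apply]; positivity
  | succ t ih => exact hu.step_le (hy t) ih q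

lemma neg_exp_div_le {θ : ℝ} (hθ : 0 < θ) (dv : VOQ N → ℤ) (q : VOQ N) :
    -(Real.exp (θ * ‖euclidean dv‖) / θ) ≤ dv q := by
  rw [neg_le, le_div_iff₀ hθ]
  nlinarith [neg_abs_le (dv q : ℝ), abs_le_norm_euclidean dv q,
    Real.add_one_le_exp (θ * ‖euclidean dv‖)]

lemma exists_small_exponent {c : ℝ} (hN : 0 < N) (hc : 0 < c) (hc1 : c ≤ 1) :
    ∃ θ : ℝ, 0 < θ ∧ θ * N ≤ 1 ∧ θ * c ≤ 1 ∧ θ ^ 2 * N ^ 2 ≤ θ * c / 4 := by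
  have hN1 : (1 : ℝ) ≤ N := by exact_mod_cast hN
  have hN2 : (1 : ℝ) ≤ N ^ 2 := one_le_pow₀ hN1
  refine ⟨c / (4 * N ^ 2), by positivity, ?_, ?_, le_of_eq (by field_simp)⟩
  · rw [div_mul_eq_mul_div, div_le_one (by positivity)]
    nlinarith
  · rw [div_mul_eq_mul_div, div_le_one (by positivity)]
    nlinarith

section Arrivals

variable {Ω : Type*} [MeasurableSpace Ω] {μ : Measure Ω} {lam : VOQ N → ℝ}
  {x : ℕ → VOQ N → Ω → ℤ}

def path (x : ℕ → VOQ N → Ω → ℤ) (ω : Ω) : ℕ → VOQ N → ℤ := fun t q => x t q ω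

structure IsBernoulliArrivals (μ : Measure Ω) (lam : VOQ N → ℝ) (x : ℕ → VOQ N → Ω → ℤ) :
    Prop where
  isZeroOne : ∀ t ω, IsZeroOne (path x ω t)
  measurable : ∀ t q, Measurable (x t q)
  indep : iIndepFun (fun p : ℕ × VOQ N => x p.1 p.2) μ
  measure_eq_one : ∀ t q, μ {ω | x t q ω = 1} = ENNReal.ofReal (lam q)

namespace IsBernoulliArrivals

lemma measurable_path (hX : IsBernoulliArrivals μ lam x) (t : ℕ) :
    Measurable fun ω => path x ω t :=
  measurable_pi_lambda _ fun q => hX.measurable t q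

lemma measurable_run (hX : IsBernoulliArrivals μ lam x)
    (u : (VOQ N → ℤ) → (VOQ N → ℤ) → (VOQ N → ℤ)) (t : ℕ) :
    Measurable fun ω => run u (path x ω) t := by
  induction t with
  | zero => exact measurable_const
  | succ t ih =>
    exact (measurable_of_countable fun p : (VOQ N → ℤ) × (VOQ N → ℤ) => step u p.1 p.2).comp
      (ih.prodMk (hX.measurable_path t))

/-- The state and the current arrivals take finitely many values. -/
lemma integrable_comp [IsFiniteMeasure μ] (hX : IsBernoulliArrivals μ lam x)
    (hu : ∀ dv xv, IsZeroOne (u dv xv)) (t : ℕ) (g : (VOQ N → ℤ) → (VOQ N → ℤ) → ℝ) :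
    Integrable (fun ω => g (run u (path x ω) t) (path x ω t)) μ := by
  obtain ⟨B, hB⟩ := (((Set.finite_Icc (fun _ => -(t : ℤ)) fun _ => (t : ℤ)).prod
    (Set.finite_Icc 0 1)).image fun p : (VOQ N → ℤ) × (VOQ N → ℤ) => ‖g p.1 p.2‖).bddAbove
  refine Integrable.of_bound ((measurable_of_countable (Function.uncurry g)).comp
    ((hX.measurable_run u t).prodMk (hX.measurable_path t))).aestronglyMeasurable B
    (ae_of_all _ fun ω =>
      hB ⟨(_, _), ⟨⟨fun q => ?_, fun q => ?_⟩, ⟨fun q => ?_, fun q => ?_⟩⟩, rfl⟩)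
  · exact (abs_le.1 (abs_run_le hu (fun s => hX.isZeroOne s ω) t q)).1
  · exact (abs_le.1 (abs_run_le hu (fun s => hX.isZeroOne s ω) t q)).2
  all_goals rcases hX.isZeroOne t ω q with h | h <;> simp only [path] at h <;> simp [h]

lemma indepFun_run (hX : IsBernoulliArrivals μ lam x)
    (u : (VOQ N → ℤ) → (VOQ N → ℤ) → (VOQ N → ℤ)) (t : ℕ) (q : VOQ N) :
    IndepFun (fun ω => run u (path x ω) t) (x t q) μ := by
  set S : Finset (ℕ × VOQ N) := range t ×ˢ univ
  have hST : Disjoint S {(t, q)} := by simp [S]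
  have h := (hX.indep.indepFun_finset S {(t, q)} hST fun p => hX.measurable p.1 p.2).comp
    (φ := fun z : S → ℤ => run u (fun s q' => if h : (s, q') ∈ S then z ⟨_, h⟩ else 0) t)
    (ψ := fun z => z ⟨(t, q), mem_singleton_self _⟩) (measurable_of_countable _)
    (measurable_of_countable _)
  convert h using 1
  · funext ω
    exact run_congr fun s hs => funext fun q' => by simp [S, hs, path]
  · rfl

lemma integral_path (hX : IsBernoulliArrivals μ lam x) (hlam : ∀ q, 0 ≤ lam q) (t : ℕ)
    (q : VOQ N) : ∫ ω, (path x ω t q : ℝ) ∂μ = lam q := by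
  have hind : (fun ω => (path x ω t q : ℝ)) = (x t q ⁻¹' {1}).indicator 1 := by
    funext ω
    rcases hX.isZeroOne t ω q with h | h <;> simp_all [path]
  have hset : x t q ⁻¹' {1} = {ω | x t q ω = 1} := rfl
  rw [hind, integral_indicator_one ((hX.measurable t q) (measurableSet_singleton 1)),
    measureReal_def, hset, hX.measure_eq_one, ENNReal.toReal_ofReal (hlam q)]

lemma integral_mul_path (hX : IsBernoulliArrivals μ lam x) (hlam : ∀ q, 0 ≤ lam q)
    (u : (VOQ N → ℤ) → (VOQ N → ℤ) → (VOQ N → ℤ)) (t : ℕ) (q : VOQ N) (g : (VOQ N → ℤ) → ℝ) :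
    ∫ ω, g (run u (path x ω) t) * path x ω t q ∂μ
      = (∫ ω, g (run u (path x ω) t) ∂μ) * lam q := by
  rw [← hX.integral_path hlam t q]
  exact ((hX.indepFun_run u t q).comp (measurable_of_countable g)
    (measurable_of_countable (Int.cast : ℤ → ℝ))).integral_fun_mul_eq_mul_integral
    ((measurable_of_countable g).comp (hX.measurable_run u t)).aestronglyMeasurable
    ((measurable_of_countable _).comp (hX.measurable t q)).aestronglyMeasurable

lemma integral_le_of_affine_bound [IsFiniteMeasure μ] (hX : IsBernoulliArrivals μ lam x)
    (hlam : ∀ q, 0 ≤ lam q) (hu : ∀ dv xv, IsZeroOne (u dv xv)) (t : ℕ)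
    {P : (VOQ N → ℤ) → Prop} (hP : ∀ ω, P (run u (path x ω) t))
    (F : (VOQ N → ℤ) → (VOQ N → ℤ) → ℝ) (H : (VOQ N → ℤ) → ℝ)
    (hF : ∀ dv, P dv → ∃ (a : ℝ) (b : VOQ N → ℝ),
      (∀ xv, IsZeroOne xv → F dv xv ≤ a + ∑ q, b q * xv q) ∧ a + ∑ q, b q * lam q ≤ H dv) :
    ∫ ω, F (run u (path x ω) t) (path x ω t) ∂μ ≤ ∫ ω, H (run u (path x ω) t) ∂μ := by
  choose! A B hA hB using hF
  have hint := hX.integrable_comp hu t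
  calc ∫ ω, F (run u (path x ω) t) (path x ω t) ∂μ
      ≤ ∫ ω, A (run u (path x ω) t)
          + ∑ q, B (run u (path x ω) t) q * path x ω t q ∂μ :=
        integral_mono (hint F) (hint fun dv xv => A dv + ∑ q, B dv q * xv q)
          fun ω => hA _ (hP ω) _ (hX.isZeroOne t ω)
    _ = ∫ ω, A (run u (path x ω) t) + ∑ q, B (run u (path x ω) t) q * lam q ∂μ := by
        rw [integral_add (hint fun dv _ => A dv)
            (integrable_finsetSum _ fun q _ => hint fun dv xv => B dv q * xv q),
          integral_add (hint fun dv _ => A dv)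
            (integrable_finsetSum _ fun q _ => hint fun dv _ => B dv q * lam q),
          integral_finsetSum _ fun q _ => hint fun dv xv => B dv q * xv q,
          integral_finsetSum _ fun q _ => hint fun dv _ => B dv q * lam q]
        congr 1
        exact sum_congr rfl fun q _ =>
          (hX.integral_mul_path hlam u t q fun dv => B dv q).trans (integral_mul_const _ _).symm
    _ ≤ ∫ ω, H (run u (path x ω) t) ∂μ :=
        integral_mono (hint fun dv _ => A dv + ∑ q, B dv q * lam q) (hint fun dv _ => H dv)
          fun ω => hB _ (hP ω)

theorem exists_integral_exp_norm_le [IsProbabilityMeasure μ] (hX : IsBernoulliArrivals μ lam x)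
    (hlam : ∀ q, 0 ≤ lam q) (hrow : ∀ i, ∑ j, lam (i, j) < 1)
    (hcol : ∀ j, ∑ i, lam (i, j) < 1) (hu : IsMSLPolicy N ℓ u) (hN : 0 < N) :
    ∃ θ > 0, ∃ M, ∀ t, ∫ ω, Real.exp (θ * ‖euclidean (run u (path x ω) t)‖) ∂μ ≤ M := by
  obtain ⟨c, hc, hc1, C, hdrift⟩ :=
    exists_minWeight_sub_le hN hlam hrow hcol (L := ℓ + 1) (by positivity)
  obtain ⟨θ, hθ, hθN, hθc, hθ2⟩ := exists_small_exponent hN hc hc1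
  set K := max 1 ((2 * C + 2 * N + N ^ 2) / c)
  have hCK : 2 * C + 2 * N + N ^ 2 ≤ c * K :=
    (div_le_iff₀' hc).1 (le_max_right _ _)
  have hstep : ∀ t, ∫ ω, Real.exp (θ * ‖euclidean (run u (path x ω) (t + 1))‖) ∂μ
      ≤ (1 - θ * c / 4) * ∫ ω, Real.exp (θ * ‖euclidean (run u (path x ω) t)‖) ∂μ
        + Real.exp (θ * (K + N)) := fun t => by
    refine (hX.integral_le_of_affine_bound hlam hu.isZeroOne t
      (P := fun dv => ∀ q, dv q ≤ ℓ + 1) (fun ω => hu.run_le (fun s => hX.isZeroOne s ω) t)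
      (fun dv xv => Real.exp (θ * ‖euclidean (step u dv xv)‖))
      (fun dv => (1 - θ * c / 4) * Real.exp (θ * ‖euclidean dv‖) + Real.exp (θ * (K + N)))
      fun dv hdv => hu.exists_affine_bound hc hθ hθN (by linarith) (by linarith)
        (by positivity) hCK dv (hdrift dv fun q => by exact_mod_cast hdv q)).trans_eq ?_
    rw [integral_add _ (integrable_const _), integral_const_mul, integral_const]
    · simp
    · exact (hX.integrable_comp hu.isZeroOne t fun dv _ =>
        Real.exp (θ * ‖euclidean dv‖)).const_mul _
  exact ⟨θ, hθ, _, le_max_div_of_le_mul_add (by linarith) (by nlinarith) hstep⟩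

theorem exists_le_integral_run [IsProbabilityMeasure μ] (hX : IsBernoulliArrivals μ lam x)
    (hlam : ∀ q, 0 ≤ lam q) (hrow : ∀ i, ∑ j, lam (i, j) < 1)
    (hcol : ∀ j, ∑ i, lam (i, j) < 1) (hu : IsMSLPolicy N ℓ u) (hN : 0 < N) :
    ∃ B : ℝ, ∀ t q, B ≤ ∫ ω, (run u (path x ω) t q : ℝ) ∂μ := by
  obtain ⟨θ, hθ, M, hM⟩ := hX.exists_integral_exp_norm_le hlam hrow hcol hu hN
  refine ⟨-(M / θ), fun t q => ?_⟩
  have hint := hX.integrable_comp hu.isZeroOne t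
  calc -(M / θ) ≤ ∫ ω, -(Real.exp (θ * ‖euclidean (run u (path x ω) t)‖) / θ) ∂μ := by
        rw [integral_neg, integral_div, neg_le_neg_iff]
        exact div_le_div_of_nonneg_right (hM t) hθ.le
    _ ≤ _ := integral_mono (hint fun dv _ => -(Real.exp (θ * ‖euclidean dv‖) / θ))
        (hint fun dv _ => (dv q : ℝ)) fun ω => neg_exp_div_le hθ _ q

end IsBernoulliArrivals

end Arrivals

end MSL

theorem stmt8_general
    {Ω : Type*} [MeasurableSpace Ω] (μ : Measure Ω) [IsProbabilityMeasure μ]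
    (N : ℕ) (ℓ : ℕ)
    (lam : VOQ N → ℝ)
    (hlam : ∀ q, 0 < lam q ∧ lam q < 1)
    (hadm_row : ∀ i : Fin N, ∑ j, lam (i, j) < 1)
    (hadm_col : ∀ j : Fin N, ∑ i, lam (i, j) < 1)
    (x : ℕ → VOQ N → Ω → ℤ)
    (hx01 : ∀ t q ω, x t q ω = 0 ∨ x t q ω = 1)
    (hxmeas : ∀ t q, Measurable (x t q))
    (hxindep : iIndepFun (fun p : ℕ × VOQ N => x p.1 p.2) μ)
    (hxlaw : ∀ t q, μ {ω | x t q ω = 1} = ENNReal.ofReal (lam q))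
    (u : (VOQ N → ℤ) → (VOQ N → ℤ) → (VOQ N → ℤ))
    (hMSL : ∀ dv xv : VOQ N → ℤ, ∃ π : Equiv.Perm (Fin N),
      (∀ π' : Equiv.Perm (Fin N),
        ipZ N (dv - xv) (confVec N π) ≤ ipZ N (dv - xv) (confVec N π')) ∧
      u dv xv = fun q => if (ℓ : ℤ) ≤ dv q - xv q then 0 else confVec N π q)
    (d : ℕ → Ω → VOQ N → ℤ)
    (hd0 : ∀ ω, d 0 ω = 0)
    (hdrec : ∀ t ω, d (t + 1) ω =
      d t ω + u (d t ω) (fun q => x t q ω) - fun q => x t q ω) :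
    ∀ q : VOQ N,
      ⊥ < Filter.liminf
        (fun t : ℕ => ((∫ ω, ((d t ω q : ℝ)) ∂μ : ℝ) : EReal)) Filter.atTop := by
  intro q
  obtain rfl : d = fun t ω => MSL.run u (MSL.path x ω) t := by
    funext t ω
    induction t with
    | zero => exact hd0 ω
    | succ t ih => rw [hdrec, ih]; rfl
  have hX : MSL.IsBernoulliArrivals μ lam x := ⟨fun t ω q => hx01 t q ω, hxmeas, hxindep, hxlaw⟩
  have hu : MSL.IsMSLPolicy N ℓ u := hMSL
  obtain ⟨B, hB⟩ :=
    hX.exists_le_integral_run (fun q => (hlam q).1.le) hadm_row hadm_col hu q.1.pos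
  exact (EReal.bot_lt_coe B).trans_le (Filter.le_liminf_of_le (by isBoundedDefault)
    (Filter.Eventually.of_forall fun t => EReal.coe_le_coe_iff.2 (hB t q)))

/-- **Theorem (100% admissibility of MSL(ℓ)).** For any admissible i.i.d. load `λ` on an
`N×N` switch (`N ≥ 1`) and any measurable MSL(ℓ) policy `u`, the deviation process `(d^t)`
generated from `d⁰ = 0` satisfies `liminf_{t→∞} E[d_q^t] > −∞` for every VOQ `q`. -/
theorem stmt8
    {Ω : Type*} [MeasurableSpace Ω] (μ : Measure Ω) [IsProbabilityMeasure μ]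
    (N : ℕ) (hN : 1 ≤ N) (ℓ : ℕ)
    (lam : VOQ N → ℝ)
    (hlam : ∀ q, 0 < lam q ∧ lam q < 1)
    (hadm_row : ∀ i : Fin N, ∑ j, lam (i, j) < 1)
    (hadm_col : ∀ j : Fin N, ∑ i, lam (i, j) < 1)
    (x : ℕ → VOQ N → Ω → ℤ)
    (hx01 : ∀ t q ω, x t q ω = 0 ∨ x t q ω = 1)
    (hxmeas : ∀ t q, Measurable (x t q))
    (hxindep : iIndepFun (fun p : ℕ × VOQ N => x p.1 p.2) μ)
    (hxlaw : ∀ t q, μ {ω | x t q ω = 1} = ENNReal.ofReal (lam q))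
    (u : (VOQ N → ℤ) → (VOQ N → ℤ) → (VOQ N → ℤ))
    (humeas : Measurable (Function.uncurry u))
    (hMSL : ∀ dv xv : VOQ N → ℤ, ∃ π : Equiv.Perm (Fin N),
      (∀ π' : Equiv.Perm (Fin N),
        ipZ N (dv - xv) (confVec N π) ≤ ipZ N (dv - xv) (confVec N π')) ∧
      u dv xv = fun q => if (ℓ : ℤ) ≤ dv q - xv q then 0 else confVec N π q)
    (d : ℕ → Ω → VOQ N → ℤ)
    (hd0 : ∀ ω, d 0 ω = 0)
    (hdrec : ∀ t ω, d (t + 1) ω =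
      d t ω + u (d t ω) (fun q => x t q ω) - fun q => x t q ω) :
    ∀ q : VOQ N,
      ⊥ < Filter.liminf
        (fun t : ℕ => ((∫ ω, ((d t ω q : ℝ)) ∂μ : ℝ) : EReal)) Filter.atTop :=
  stmt8_general μ N ℓ lam hlam hadm_row hadm_col x hx01 hxmeas hxindep hxlaw u hMSL d hd0 hdrec
end

section
/- Theorem (admissibility of MSL(ℓ)-SS under uniform loads): Let N ≥ 1, ℓ ∈ ℕ, and let λ be a uniform admissible i.i.d. load, i.e. λ_q = λ₀ for all q with N·λ₀ < 1. Then for any choice of generator permutation π (hence any operational configuration subset S_π), the deviation process (d^t) generated from d⁰ = 0 by any measurable MSL(ℓ)-SS policy on S_π satisfies liminf_{t→∞} E[d_q^t] > −∞ for every VOQ q. -/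
/-!
Write `e = ℓ - d` for the gaps to the threshold: MSL(ℓ) never lets a deviation exceed `ℓ`, so
`e ≥ 0`. The `N` shifts of a configuration sum to the all-ones vector, so the minimising shift
serves at least a `1/N` fraction of the total gap `∑ e`, up to `N²`. As `N λ₀ < 1`, this gives
the Euclidean norm `‖e‖` a drift bounded away from zero towards the origin once `‖e‖` is large,
and (Hajek's argument) `E exp (θ ‖e^t‖)` contracts by a fixed factor up to an additive constant,
hence stays bounded for a small `θ > 0`. Since `d_q ≥ ℓ - ‖e‖ ≥ ℓ - exp (θ ‖e‖) / θ`, the means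
`E d_q^t` are bounded below uniformly in `t`.
-/

open Finset MeasureTheory ProbabilityTheory

/-- The `k`-fold circular shift `C^k(v_π)` of the configuration generated by `π`:
it is the configuration of the permutation `i ↦ π(i − k)`. -/
def confShift (N : ℕ) [NeZero N] (k : ℕ) (π : Equiv.Perm (Fin N)) : VOQ N → ℤ :=
  confVec N ((Equiv.subRight (Fin.ofNat N k)).trans π)

section Lyapunov
variable {ι : Type*} [Fintype ι]

noncomputable def l2norm (e : ι → ℝ) : ℝ := √(∑ i, e i ^ 2)

lemma sq_l2norm (e : ι → ℝ) : l2norm e ^ 2 = ∑ i, e i ^ 2 := Real.sq_sqrt (by positivity)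

lemma l2norm_eq_norm (e : ι → ℝ) : l2norm e = ‖(WithLp.toLp 2 e : EuclideanSpace ℝ ι)‖ := by
  simp [l2norm, EuclideanSpace.norm_eq]

lemma l2norm_add_le (e v : ι → ℝ) : l2norm (e + v) ≤ l2norm e + l2norm v := by
  simpa only [l2norm_eq_norm, WithLp.toLp_add] using norm_add_le _ _

lemma le_l2norm (e : ι → ℝ) (i : ι) : e i ≤ l2norm e :=
  (le_abs_self _).trans <| Real.abs_le_sqrt <|
    Finset.single_le_sum (f := fun i => e i ^ 2) (fun _ _ => sq_nonneg _) (mem_univ i)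

lemma l2norm_le_sum {e : ι → ℝ} (he : ∀ i, 0 ≤ e i) : l2norm e ≤ ∑ i, e i :=
  (Real.sqrt_le_left (Finset.sum_nonneg fun i _ => he i)).2 <|
    Finset.sum_sq_le_sq_sum_of_nonneg fun i _ => he i

lemma l2norm_le_sqrt_card {v : ι → ℝ} (hv : ∀ i, |v i| ≤ 1) :
    l2norm v ≤ √(Fintype.card ι) := by
  refine Real.sqrt_le_sqrt ?_
  calc ∑ i, v i ^ 2 ≤ ∑ _i : ι, (1 : ℝ) :=
        Finset.sum_le_sum fun i _ => by nlinarith [abs_le.1 (hv i), sq_abs (v i)]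
    _ = Fintype.card ι := by simp

lemma le_add_div_of_sq_le {w w' D : ℝ} (hw : 0 < w) (h : w' ^ 2 ≤ w ^ 2 + 2 * D) :
    w' ≤ w + D / w := by
  rw [← sub_le_iff_le_add', le_div_iff₀ hw]
  nlinarith [sq_nonneg (w' - w)]

/-- Expanding `‖e + v‖²` with `v_i² ≤ 1` and linearising the square root at `‖e‖`. -/
lemma l2norm_add_le_add_div {e v : ι → ℝ} (he : 0 < l2norm e) (hv : ∀ i, |v i| ≤ 1) :
    l2norm (e + v) ≤ l2norm e + (∑ i, e i * v i + Fintype.card ι / 2) / l2norm e := by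
  refine le_add_div_of_sq_le he ?_
  have hsq : ∀ i, v i ^ 2 ≤ 1 := fun i => by nlinarith [abs_le.1 (hv i), sq_abs (v i)]
  calc l2norm (e + v) ^ 2 = ∑ i, (e i ^ 2 + 2 * (e i * v i) + v i ^ 2) := by
        rw [sq_l2norm]; exact Finset.sum_congr rfl fun i _ => by simp only [Pi.add_apply]; ring
    _ ≤ ∑ i, (e i ^ 2 + 2 * (e i * v i) + 1) :=
        Finset.sum_le_sum fun i _ => by linarith [hsq i]
    _ = l2norm e ^ 2 + 2 * (∑ i, e i * v i + Fintype.card ι / 2) := by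
        simp only [Finset.sum_add_distrib, ← Finset.mul_sum, sq_l2norm, Finset.sum_const,
          Finset.card_univ, nsmul_eq_mul, mul_one]
        ring

lemma Real.exp_le_one_add_mul_exp {z m : ℝ} (hz : 0 ≤ z) (hzm : z ≤ m) :
    Real.exp z ≤ 1 + z * Real.exp m := by
  have h : (1 - z) * Real.exp z ≤ 1 := by
    calc (1 - z) * Real.exp z ≤ Real.exp (-z) * Real.exp z := by
          gcongr; linarith [Real.add_one_le_exp (-z)]
      _ = 1 := by rw [← Real.exp_add]; simp
  nlinarith [Real.exp_le_exp.2 hzm]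

variable (θ σ c K : ℝ)

open Real

/- `exp (θ ‖e + x - u‖) ≤ driftBase e + ∑ i, driftSlope e i * x i` (`exp_l2norm_add_le`) bounds the
next value of the Lyapunov function by an expression affine in the arrivals `x`, so its mean only
needs each `x i` to be independent of the current state. -/
noncomputable def driftFactor (e : ι → ℝ) : ℝ :=
  exp (θ * (l2norm e - (σ * ∑ i, e i - c - Fintype.card ι / 2) / l2norm e))

noncomputable def driftBase (e : ι → ℝ) : ℝ :=
  if K ≤ l2norm e then driftFactor θ σ c e else exp (θ * (K + √(Fintype.card ι)))

noncomputable def driftSlope (e : ι → ℝ) (i : ι) : ℝ :=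
  if K ≤ l2norm e then
    exp (θ * Fintype.card ι) * θ * driftFactor θ σ c e * (e i / l2norm e)
  else 0

variable {θ σ c K}

lemma l2norm_add_sub_le {e x u : ι → ℝ} (hW : 0 < l2norm e)
    (hx0 : ∀ i, 0 ≤ x i) (hx1 : ∀ i, x i ≤ 1) (hu0 : ∀ i, 0 ≤ u i) (hu1 : ∀ i, u i ≤ 1)
    (hserv : σ * ∑ i, e i - c ≤ ∑ i, e i * u i) :
    l2norm (e + (x - u)) ≤ l2norm e - (σ * ∑ i, e i - c - Fintype.card ι / 2) / l2norm e +
      (∑ i, e i * x i) / l2norm e := by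
  refine (l2norm_add_le_add_div hW fun i =>
    abs_sub_le_iff.2 ⟨by linarith [hx1 i, hu0 i], by linarith [hx0 i, hu1 i]⟩).trans ?_
  have hsplit : ∑ i, e i * (x i - u i) = ∑ i, e i * x i - ∑ i, e i * u i := by
    simp only [mul_sub, Finset.sum_sub_distrib]
  have h : (∑ i, e i * x i - ∑ i, e i * u i + Fintype.card ι / 2) / l2norm e ≤
      (∑ i, e i * x i - (σ * ∑ i, e i - c - Fintype.card ι / 2)) / l2norm e :=
    div_le_div_of_nonneg_right (by linarith) hW.le
  rw [sub_div] at h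
  rw [hsplit]
  linarith

lemma exp_l2norm_add_le {e x u : ι → ℝ} (hθ : 0 ≤ θ) (hK : 0 < K) (he : ∀ i, 0 ≤ e i)
    (hx0 : ∀ i, 0 ≤ x i) (hx1 : ∀ i, x i ≤ 1) (hu0 : ∀ i, 0 ≤ u i) (hu1 : ∀ i, u i ≤ 1)
    (hserv : σ * ∑ i, e i - c ≤ ∑ i, e i * u i) :
    exp (θ * l2norm (e + (x - u))) ≤
      driftBase θ σ c K e + ∑ i, driftSlope θ σ c K e i * x i := by
  by_cases htop : K ≤ l2norm e
  · simp only [driftBase, driftSlope, if_pos htop]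
    have hW : 0 < l2norm e := hK.trans_le htop
    have hnext := l2norm_add_sub_le hW hx0 hx1 hu0 hu1 hserv
    set W := l2norm e
    set A := (∑ i, e i * x i) / W
    have hA0 : 0 ≤ A := div_nonneg (Finset.sum_nonneg fun i _ => mul_nonneg (he i) (hx0 i)) hW.le
    have hAm : A ≤ Fintype.card ι := by
      rw [div_le_iff₀ hW]
      calc ∑ i, e i * x i ≤ ∑ _i : ι, W :=
            Finset.sum_le_sum fun i _ => by nlinarith [le_l2norm e i, he i, hx0 i, hx1 i]
        _ = Fintype.card ι * W := by simp
    calc exp (θ * l2norm (e + (x - u)))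
        ≤ driftFactor θ σ c e * exp (θ * A) := by
          rw [driftFactor, ← exp_add, exp_le_exp, ← mul_add]
          exact mul_le_mul_of_nonneg_left hnext hθ
      _ ≤ driftFactor θ σ c e * (1 + θ * A * exp (θ * Fintype.card ι)) :=
          mul_le_mul_of_nonneg_left
            (exp_le_one_add_mul_exp (mul_nonneg hθ hA0) (mul_le_mul_of_nonneg_left hAm hθ))
            (exp_pos _).le
      _ = driftFactor θ σ c e +
            ∑ i, exp (θ * Fintype.card ι) * θ * driftFactor θ σ c e * (e i / W) * x i := by
          rw [mul_add, mul_one]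
          congr 1
          simp only [A, Finset.sum_div, Finset.mul_sum, Finset.sum_mul]
          refine Finset.sum_congr rfl fun i _ => ?_
          ring
  · simp only [driftBase, driftSlope, if_neg htop, zero_mul, Finset.sum_const_zero, add_zero]
    gcongr
    calc l2norm (e + (x - u)) ≤ l2norm e + √(Fintype.card ι) :=
          (l2norm_add_le _ _).trans <| by
            gcongr
            exact l2norm_le_sqrt_card fun i =>
              abs_sub_le_iff.2 ⟨by linarith [hx1 i, hu0 i], by linarith [hx0 i, hu1 i]⟩
      _ ≤ K + √(Fintype.card ι) := by linarith

lemma driftBase_add_mul_sum_driftSlope_le {e : ι → ℝ} {lam γ : ℝ} (hθ : 0 ≤ θ)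
    (hγ : 0 ≤ γ) (hload : exp (θ * Fintype.card ι) * lam ≤ σ - γ)
    (hK : 0 < K) (hKc : 2 * (c + Fintype.card ι / 2) ≤ γ * K) (he : ∀ i, 0 ≤ e i) :
    driftBase θ σ c K e + lam * ∑ i, driftSlope θ σ c K e i ≤
      exp (-(θ * γ / 2)) * exp (θ * l2norm e) + exp (θ * (K + √(Fintype.card ι))) := by
  by_cases htop : K ≤ l2norm e
  · simp only [driftBase, driftSlope, if_pos htop]
    set W := l2norm e
    set m : ℝ := (Fintype.card ι : ℝ)
    have hW : 0 < W := hK.trans_le htop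
    set s := (∑ i, e i) / W
    have hs : 1 ≤ s := (one_le_div hW).2 (l2norm_le_sum he)
    have hcW : (c + m / 2) / W ≤ γ / 2 := by
      rw [div_le_iff₀ hW]; nlinarith
    have hsum : lam * ∑ i, exp (θ * m) * θ * driftFactor θ σ c e * (e i / W) =
        driftFactor θ σ c e * (exp (θ * m) * lam * θ * s) := by
      simp only [s, Finset.mul_sum, Finset.sum_div]
      exact Finset.sum_congr rfl fun i _ => by ring
    have hexponent : θ * (W - (σ * ∑ i, e i - c - m / 2) / W) + exp (θ * m) * lam * θ * s ≤
        -(θ * γ / 2) + θ * W := by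
      have hσ : (σ * ∑ i, e i - c - m / 2) / W = σ * s - (c + m / 2) / W := by
        simp only [s]; field_simp; ring
      rw [hσ]
      nlinarith [mul_le_mul_of_nonneg_right hload (mul_nonneg hθ (by linarith : (0 : ℝ) ≤ s)),
        mul_le_mul_of_nonneg_left hcW hθ,
        mul_nonneg (mul_nonneg hθ hγ) (by linarith : (0 : ℝ) ≤ s - 1)]
    calc driftFactor θ σ c e + lam * ∑ i, exp (θ * m) * θ * driftFactor θ σ c e * (e i / W)
        = driftFactor θ σ c e * (1 + exp (θ * m) * lam * θ * s) := by rw [hsum]; ring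
      _ ≤ driftFactor θ σ c e * exp (exp (θ * m) * lam * θ * s) := by
          gcongr
          · exact (exp_pos _).le
          · linarith [add_one_le_exp (exp (θ * m) * lam * θ * s)]
      _ ≤ exp (-(θ * γ / 2)) * exp (θ * W) := by
          rw [driftFactor, ← exp_add, ← exp_add, exp_le_exp]
          exact hexponent
      _ ≤ _ := le_add_of_nonneg_right (exp_pos _).le
  · simp only [driftBase, driftSlope, if_neg htop, Finset.sum_const_zero, mul_zero, add_zero]
    exact le_add_of_nonneg_left (by positivity)

end Lyapunov

lemma exists_exp_mul_le_sub {m lam σ : ℝ} (hm : 0 < m) (hlam : 0 < lam) (hlt : lam < σ) :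
    ∃ θ > 0, ∃ γ > 0, Real.exp (θ * m) * lam ≤ σ - γ := by
  have hr : 1 < (σ + lam) / (2 * lam) := by rw [one_lt_div (by positivity)]; linarith
  refine ⟨Real.log ((σ + lam) / (2 * lam)) / m, div_pos (Real.log_pos hr) hm,
    (σ - lam) / 2, by linarith, le_of_eq ?_⟩
  rw [div_mul_cancel₀ _ hm.ne', Real.exp_log (by linarith)]
  field_simp
  ring

section Probability
variable {Ω : Type*}

@[reducible] def pastArrivals {ι β : Type*} [mβ : MeasurableSpace β] (x : ℕ → ι → Ω → β) (t : ℕ) :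
    MeasurableSpace Ω :=
  ⨆ p ∈ {p : ℕ × ι | p.1 < t}, mβ.comap (x p.1 p.2)

variable {ι α β : Type*} [MeasurableSpace α] [mβ : MeasurableSpace β] {x : ℕ → ι → Ω → β}
  {f : α → (ι → β) → α} {d : ℕ → Ω → α} {a₀ : α}

lemma measurable_pastArrivals_of_rec (hf : Measurable (Function.uncurry f))
    (hd0 : ∀ ω, d 0 ω = a₀) (hrec : ∀ t ω, d (t + 1) ω = f (d t ω) (fun i => x t i ω)) :
    ∀ t, Measurable[pastArrivals x t] (d t)
  | 0 => by
      rw [funext hd0]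
      exact measurable_const
  | t + 1 => by
      have hmono : pastArrivals x t ≤ pastArrivals x (t + 1) :=
        biSup_mono fun p (hp : p.1 < t) => Nat.lt_succ_of_lt hp
      have hx : Measurable[pastArrivals x (t + 1)] (fun ω i => x t i ω) :=
        @measurable_pi_lambda _ _ _ (pastArrivals x (t + 1)) _ _ fun i => Measurable.of_comap_le <|
          le_iSup₂ (f := fun p (_ : p ∈ {p : ℕ × ι | p.1 < t + 1}) => mβ.comap (x p.1 p.2))
            (t, i) (Nat.lt_succ_self t)
      rw [funext (hrec t)]
      exact @Measurable.comp _ _ _ (pastArrivals x (t + 1)) _ _ _ _ hf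
        (((measurable_pastArrivals_of_rec hf hd0 hrec t).mono hmono le_rfl).prodMk hx)

variable [mΩ : MeasurableSpace Ω] {μ : Measure Ω}

lemma pastArrivals_le (hx : ∀ t i, Measurable (x t i)) (t : ℕ) : pastArrivals x t ≤ mΩ :=
  iSup₂_le fun p _ => (hx p.1 p.2).comap_le

lemma indepFun_of_measurable_pastArrivals {γ : Type*} [MeasurableSpace γ] {Y : Ω → γ} {t : ℕ}
    (hx : ∀ t i, Measurable (x t i)) (hindep : iIndepFun (fun p : ℕ × ι => x p.1 p.2) μ)
    (hY : Measurable[pastArrivals x t] Y) (i : ι) : IndepFun Y (x t i) μ := by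
  have h := indep_iSup_of_disjoint (fun p => (hx p.1 p.2).comap_le)
    ((iIndepFun_iff_iIndep _ _ _).1 hindep)
    (Set.disjoint_singleton_right.2 (lt_irrefl t) : Disjoint {p : ℕ × ι | p.1 < t} {(t, i)})
  rw [_root_.iSup_singleton] at h
  exact (IndepFun_iff_Indep _ _ _).2 (indep_of_indep_of_le_left h hY.comap_le)

lemma integral_le_of_le_add_sum_mul {κ : Type*} [Fintype κ] {V A : Ω → ℝ} {B X : κ → Ω → ℝ}
    {lam : ℝ} (hV : Integrable V μ) (hA : Integrable A μ) (hB : ∀ i, Integrable (B i) μ)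
    (hX : ∀ i, Integrable (X i) μ) (hind : ∀ i, IndepFun (B i) (X i) μ)
    (hmean : ∀ i, ∫ ω, X i ω ∂μ = lam) (hle : ∀ ω, V ω ≤ A ω + ∑ i, B i ω * X i ω) :
    ∫ ω, V ω ∂μ ≤ ∫ ω, (A ω + lam * ∑ i, B i ω) ∂μ := by
  have hBX : ∀ i, Integrable (fun ω => B i ω * X i ω) μ := fun i =>
    (hind i).integrable_mul (hB i) (hX i)
  calc ∫ ω, V ω ∂μ ≤ ∫ ω, (A ω + ∑ i, B i ω * X i ω) ∂μ :=
        integral_mono hV (hA.add (integrable_finsetSum _ fun i _ => hBX i)) hle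
    _ = ∫ ω, (A ω + lam * ∑ i, B i ω) ∂μ := by
        rw [integral_add hA (integrable_finsetSum _ fun i _ => hBX i),
          integral_add hA ((integrable_finsetSum _ fun i _ => hB i).const_mul lam),
          integral_finsetSum _ fun i _ => hBX i, integral_const_mul,
          integral_finsetSum _ fun i _ => hB i, Finset.mul_sum]
        congr 1
        refine Finset.sum_congr rfl fun i _ => ?_
        rw [(hind i).integral_fun_mul_eq_mul_integral (hB i).aestronglyMeasurable
          (hX i).aestronglyMeasurable, hmean, mul_comm]

lemma integrable_comp_of_finite_range [IsFiniteMeasure μ] [Countable α]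
    [MeasurableSingletonClass α] {Y : Ω → α} (hY : Measurable Y)
    (hfin : (Set.range Y).Finite) (g : α → ℝ) : Integrable (fun ω => g (Y ω)) μ := by
  obtain ⟨C, hC⟩ := (hfin.image fun a => ‖g a‖).bddAbove
  exact .of_bound ((measurable_of_countable g).comp hY).aestronglyMeasurable C
    (ae_of_all _ fun ω => hC ⟨Y ω, ⟨ω, rfl⟩, rfl⟩)

end Probability

lemma bddAbove_range_of_le_mul_add {a : ℕ → ℝ} {ρ B : ℝ} (hρ0 : 0 ≤ ρ) (hρ1 : ρ < 1)
    (h : ∀ t, a (t + 1) ≤ ρ * a t + B) : BddAbove (Set.range a) := by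
  set M := max (a 0) (B / (1 - ρ))
  have hB : B ≤ (1 - ρ) * M := by
    rw [← div_le_iff₀' (by linarith)]
    exact le_max_right _ _
  refine ⟨M, ?_⟩
  rintro _ ⟨t, rfl⟩
  induction t with
  | zero => exact le_max_left _ _
  | succ t ih => nlinarith [h t]

lemma bot_lt_liminf_of_forall_le {f : ℕ → ℝ} {c : ℝ} (h : ∀ t, c ≤ f t) :
    ⊥ < Filter.liminf (fun t => (f t : EReal)) Filter.atTop :=
  (EReal.bot_lt_coe c).trans_le <| Filter.le_liminf_of_le (by isBoundedDefault)
    (Filter.Eventually.of_forall fun t => EReal.coe_le_coe_iff.2 (h t))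

namespace Switch

section Lyapunov
variable {N : ℕ}

def gap (ℓ : ℕ) (dv : VOQ N → ℤ) (q : VOQ N) : ℝ := ℓ - dv q

noncomputable def lyapunov (θ : ℝ) (ℓ : ℕ) (dv : VOQ N → ℤ) : ℝ := Real.exp (θ * l2norm (gap ℓ dv))

lemma sub_lyapunov_div_le {θ : ℝ} (hθ : 0 < θ) (dv : VOQ N → ℤ) (q : VOQ N) :
    ℓ - lyapunov θ ℓ dv / θ ≤ dv q := by
  have hW : θ * gap ℓ dv q ≤ lyapunov θ ℓ dv :=
    (mul_le_mul_of_nonneg_left (le_l2norm _ q) hθ.le).trans <|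
      (le_add_of_nonneg_right zero_le_one).trans (Real.add_one_le_exp _)
  rw [← le_div_iff₀' hθ] at hW
  linarith [show gap ℓ dv q = ℓ - dv q from rfl]

end Lyapunov

variable {N : ℕ} [NeZero N]

lemma confShift_eq_zero_or_one (k : ℕ) (π : Equiv.Perm (Fin N)) (q : VOQ N) :
    confShift N k π q = 0 ∨ confShift N k π q = 1 := by
  unfold confShift confVec; split <;> simp

lemma confShift_nonneg (k : ℕ) (π : Equiv.Perm (Fin N)) (q : VOQ N) : 0 ≤ confShift N k π q := by
  rcases confShift_eq_zero_or_one k π q with h | h <;> simp [h]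

lemma confShift_le_one (k : ℕ) (π : Equiv.Perm (Fin N)) (q : VOQ N) : confShift N k π q ≤ 1 := by
  rcases confShift_eq_zero_or_one k π q with h | h <;> simp [h]

lemma sum_confShift (k : ℕ) (π : Equiv.Perm (Fin N)) : ∑ q, confShift N k π q = N := by
  rw [Fintype.sum_prod_type]
  simp [confShift, confVec]

lemma sum_range_confShift (π : Equiv.Perm (Fin N)) (q : VOQ N) :
    ∑ k ∈ range N, confShift N k π q = 1 := by
  rw [← Fin.sum_univ_eq_sum_range (fun k => confShift N k π q)]
  have key : ∀ k : Fin N, q.2 = π (q.1 - k) ↔ k = q.1 - π.symm q.2 := by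
    intro k
    rw [← Equiv.symm_apply_eq, eq_comm, sub_eq_iff_eq_add, ← sub_eq_iff_eq_add']
    exact eq_comm
  simp [confShift, confVec, key]

lemma sum_range_ipZ_confShift (π : Equiv.Perm (Fin N)) (w : VOQ N → ℤ) :
    ∑ k ∈ range N, ipZ N w (confShift N k π) = ∑ q, w q := by
  simp only [ipZ]
  rw [Finset.sum_comm]
  simp [← Finset.mul_sum, sum_range_confShift]

def IsMSLSS (N ℓ : ℕ) [NeZero N] (π : Equiv.Perm (Fin N))
    (u : (VOQ N → ℤ) → (VOQ N → ℤ) → (VOQ N → ℤ)) : Prop :=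
  ∀ dv xv : VOQ N → ℤ, ∃ k < N,
    (∀ k' < N, ipZ N (dv - xv) (confShift N k π) ≤ ipZ N (dv - xv) (confShift N k' π)) ∧
    u dv xv = fun q => if (ℓ : ℤ) ≤ dv q - xv q then 0 else confShift N k π q

namespace IsMSLSS
variable {ℓ : ℕ} {π : Equiv.Perm (Fin N)} {u : (VOQ N → ℤ) → (VOQ N → ℤ) → (VOQ N → ℤ)}

lemma apply_eq_zero_or_one (hu : IsMSLSS N ℓ π u) (dv xv : VOQ N → ℤ) (q : VOQ N) :
    u dv xv q = 0 ∨ u dv xv q = 1 := by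
  obtain ⟨k, -, -, hk⟩ := hu dv xv
  simp only [hk]
  split_ifs
  exacts [Or.inl rfl, confShift_eq_zero_or_one k π q]

lemma next_le (hu : IsMSLSS N ℓ π u) {dv xv : VOQ N → ℤ} (hd : ∀ q, dv q ≤ ℓ)
    (hx : ∀ q, 0 ≤ xv q) (q : VOQ N) : (dv + u dv xv - xv) q ≤ ℓ := by
  obtain ⟨k, -, -, hk⟩ := hu dv xv
  have := hd q; have := hx q
  have := confShift_le_one k π q
  simp only [Pi.add_apply, Pi.sub_apply, hk]
  split_ifs <;> omega

lemma sum_sub_le_mul_sum (hu : IsMSLSS N ℓ π u) {dv xv : VOQ N → ℤ}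
    (hx0 : ∀ q, 0 ≤ xv q) (hx1 : ∀ q, xv q ≤ 1) :
    ∑ q, ((ℓ : ℤ) - dv q) - N ^ 2 ≤ N * ∑ q, ((ℓ : ℤ) - dv q) * u dv xv q := by
  obtain ⟨k, -, hmin, hk⟩ := hu dv xv
  have hv0 := confShift_nonneg k π
  set v := confShift N k π
  have hmin_avg : N * ipZ N (dv - xv) v ≤ ∑ q, (dv q - xv q) := by
    rw [← sum_range_ipZ_confShift π]
    calc (N : ℤ) * ipZ N (dv - xv) v = ∑ _k' ∈ range N, ipZ N (dv - xv) v := by simp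
      _ ≤ _ := Finset.sum_le_sum fun k' hk' => hmin k' (Finset.mem_range.mp hk')
  -- a queue switched off by the threshold rule has a nonpositive gap
  have hserved : ∀ q, ((ℓ : ℤ) - dv q) * v q ≤ ((ℓ : ℤ) - dv q) * u dv xv q := by
    intro q
    simp only [hk]
    have := hx0 q; have := hv0 q
    split_ifs <;> nlinarith
  have hcross : ∑ q, xv q * v q ≤ N := by
    rw [← sum_confShift k π]
    exact Finset.sum_le_sum fun q _ => by nlinarith [hv0 q, hx1 q, hx0 q]
  have hexpand : ∑ q, ((ℓ : ℤ) - dv q) * v q = ℓ * N - ipZ N (dv - xv) v - ∑ q, xv q * v q := by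
    simp only [ipZ, ← sum_confShift k π, Finset.mul_sum, ← Finset.sum_sub_distrib, Pi.sub_apply]
    exact Finset.sum_congr rfl fun q _ => by ring
  have htotal : ∑ q, ((ℓ : ℤ) - dv q) = ℓ * N ^ 2 - ∑ q, (dv q - xv q) - ∑ q, xv q := by
    simp only [Finset.sum_sub_distrib, Finset.sum_const, Finset.card_univ, Fintype.card_prod,
      Fintype.card_fin, nsmul_eq_mul]
    push_cast
    ring
  have hxsum : 0 ≤ ∑ q, xv q := Finset.sum_nonneg fun q _ => hx0 q
  have hN : (0 : ℤ) ≤ N := by positivity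
  calc ∑ q, ((ℓ : ℤ) - dv q) - N ^ 2 ≤ N * ∑ q, ((ℓ : ℤ) - dv q) * v q := by
        rw [hexpand, htotal]; nlinarith
    _ ≤ N * ∑ q, ((ℓ : ℤ) - dv q) * u dv xv q :=
        mul_le_mul_of_nonneg_left (Finset.sum_le_sum fun q _ => hserved q) hN

lemma inv_mul_sum_gap_sub_le (hu : IsMSLSS N ℓ π u) {dv xv : VOQ N → ℤ}
    (hx0 : ∀ q, 0 ≤ xv q) (hx1 : ∀ q, xv q ≤ 1) :
    1 / (N : ℝ) * ∑ q, gap ℓ dv q - N ≤ ∑ q, gap ℓ dv q * (u dv xv q : ℝ) := by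
  have hN : (0 : ℝ) < N := by exact_mod_cast NeZero.pos N
  have h : ∑ q, gap ℓ dv q - (N : ℝ) ^ 2 ≤ N * ∑ q, gap ℓ dv q * (u dv xv q : ℝ) := by
    simpa [gap] using (Int.cast_le (R := ℝ)).2 (hu.sum_sub_le_mul_sum hx0 hx1)
  rw [one_div_mul_eq_div, sub_le_iff_le_add, div_le_iff₀' hN]
  nlinarith

end IsMSLSS

variable {Ω : Type*} [MeasurableSpace Ω]

structure IsMSLSSProcess (μ : Measure Ω) (N ℓ : ℕ) [NeZero N] (lam0 : ℝ)
    (x : ℕ → VOQ N → Ω → ℤ) (π : Equiv.Perm (Fin N))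
    (u : (VOQ N → ℤ) → (VOQ N → ℤ) → (VOQ N → ℤ)) (d : ℕ → Ω → VOQ N → ℤ) : Prop where
  arrival_eq_zero_or_one : ∀ t q ω, x t q ω = 0 ∨ x t q ω = 1
  measurable_arrival : ∀ t q, Measurable (x t q)
  iIndepFun_arrival : iIndepFun (fun p : ℕ × VOQ N => x p.1 p.2) μ
  measure_arrival : ∀ t q, μ {ω | x t q ω = 1} = ENNReal.ofReal lam0
  policy : IsMSLSS N ℓ π u
  init : ∀ ω, d 0 ω = 0
  succ : ∀ t ω, d (t + 1) ω = d t ω + u (d t ω) (fun q => x t q ω) - fun q => x t q ω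

namespace IsMSLSSProcess
variable {μ : Measure Ω} {ℓ : ℕ} {lam0 : ℝ} {x : ℕ → VOQ N → Ω → ℤ} {π : Equiv.Perm (Fin N)}
  {u : (VOQ N → ℤ) → (VOQ N → ℤ) → (VOQ N → ℤ)} {d : ℕ → Ω → VOQ N → ℤ}

lemma arrival_nonneg (hP : IsMSLSSProcess μ N ℓ lam0 x π u d) (t : ℕ) (q : VOQ N) (ω : Ω) :
    0 ≤ x t q ω := by
  rcases hP.arrival_eq_zero_or_one t q ω with h | h <;> simp [h]

lemma arrival_le_one (hP : IsMSLSSProcess μ N ℓ lam0 x π u d) (t : ℕ) (q : VOQ N) (ω : Ω) :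
    x t q ω ≤ 1 := by
  rcases hP.arrival_eq_zero_or_one t q ω with h | h <;> simp [h]

lemma le_threshold (hP : IsMSLSSProcess μ N ℓ lam0 x π u d) (t : ℕ) (ω : Ω) (q : VOQ N) :
    d t ω q ≤ ℓ := by
  induction t generalizing q with
  | zero => simp [hP.init ω]
  | succ t ih =>
      rw [hP.succ t ω]
      exact hP.policy.next_le ih (fun q => hP.arrival_nonneg t q ω) q

lemma neg_le (hP : IsMSLSSProcess μ N ℓ lam0 x π u d) (t : ℕ) (ω : Ω) (q : VOQ N) :
    -(t : ℤ) ≤ d t ω q := by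
  induction t with
  | zero => simp [hP.init ω]
  | succ t ih =>
      have hu := hP.policy.apply_eq_zero_or_one (d t ω) (fun q => x t q ω) q
      have hx := hP.arrival_le_one t q ω
      rw [hP.succ t ω]
      simp only [Pi.add_apply, Pi.sub_apply]
      omega

lemma finite_range (hP : IsMSLSSProcess μ N ℓ lam0 x π u d) (t : ℕ) :
    (Set.range (d t)).Finite :=
  (Set.Finite.pi' fun _ => Set.finite_Icc (-(t : ℤ)) ℓ).subset <| by
    rintro _ ⟨ω, rfl⟩ q
    exact ⟨hP.neg_le t ω q, hP.le_threshold t ω q⟩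

lemma measurable_pastArrivals (hP : IsMSLSSProcess μ N ℓ lam0 x π u d) (t : ℕ) :
    Measurable[pastArrivals x t] (d t) :=
  measurable_pastArrivals_of_rec (f := fun dv xv => dv + u dv xv - xv)
    (measurable_of_countable _) hP.init hP.succ t

lemma integrable_comp [IsFiniteMeasure μ] (hP : IsMSLSSProcess μ N ℓ lam0 x π u d) (t : ℕ)
    (g : (VOQ N → ℤ) → ℝ) : Integrable (fun ω => g (d t ω)) μ :=
  integrable_comp_of_finite_range ((hP.measurable_pastArrivals t).mono
    (pastArrivals_le hP.measurable_arrival t) le_rfl) (hP.finite_range t) g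

lemma indepFun (hP : IsMSLSSProcess μ N ℓ lam0 x π u d) (t : ℕ) (q : VOQ N) :
    IndepFun (d t) (x t q) μ :=
  indepFun_of_measurable_pastArrivals hP.measurable_arrival hP.iIndepFun_arrival
    (hP.measurable_pastArrivals t) q

lemma integrable_arrival [IsFiniteMeasure μ] (hP : IsMSLSSProcess μ N ℓ lam0 x π u d) (t : ℕ)
    (q : VOQ N) : Integrable (fun ω => (x t q ω : ℝ)) μ :=
  .of_bound ((measurable_of_countable _).comp (hP.measurable_arrival t q)).aestronglyMeasurable 1
    (ae_of_all _ fun ω => by rcases hP.arrival_eq_zero_or_one t q ω with h | h <;> simp [h])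

lemma integral_arrival [IsProbabilityMeasure μ] (hP : IsMSLSSProcess μ N ℓ lam0 x π u d)
    (hlam0 : 0 ≤ lam0) (t : ℕ) (q : VOQ N) : ∫ ω, (x t q ω : ℝ) ∂μ = lam0 := by
  have hA : MeasurableSet {ω | x t q ω = 1} :=
    hP.measurable_arrival t q (measurableSet_singleton 1)
  have hind : (fun ω => (x t q ω : ℝ)) = {ω | x t q ω = 1}.indicator 1 := by
    funext ω
    rcases hP.arrival_eq_zero_or_one t q ω with h | h <;> simp [h]
  rw [hind, integral_indicator_one hA,
    measureReal_def, hP.measure_arrival, ENNReal.toReal_ofReal hlam0]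

lemma gap_nonneg (hP : IsMSLSSProcess μ N ℓ lam0 x π u d) (t : ℕ) (ω : Ω) (q : VOQ N) :
    0 ≤ gap ℓ (d t ω) q :=
  sub_nonneg.2 (by exact_mod_cast hP.le_threshold t ω q)

lemma gap_succ (hP : IsMSLSSProcess μ N ℓ lam0 x π u d) (t : ℕ) (ω : Ω) :
    gap ℓ (d (t + 1) ω) = gap ℓ (d t ω) +
      ((fun q => (x t q ω : ℝ)) - fun q => (u (d t ω) (fun q => x t q ω) q : ℝ)) := by
  funext q
  simp only [gap, hP.succ t ω, Pi.add_apply, Pi.sub_apply]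
  push_cast
  ring

lemma lyapunov_succ_le (hP : IsMSLSSProcess μ N ℓ lam0 x π u d) {θ K : ℝ} (hθ : 0 ≤ θ)
    (hK : 0 < K) (t : ℕ) (ω : Ω) :
    lyapunov θ ℓ (d (t + 1) ω) ≤ driftBase θ (1 / N) N K (gap ℓ (d t ω)) +
      ∑ q, driftSlope θ (1 / N) N K (gap ℓ (d t ω)) q * (x t q ω : ℝ) := by
  have hu := hP.policy.apply_eq_zero_or_one (d t ω) (fun q => x t q ω)
  rw [lyapunov, hP.gap_succ t ω]
  exact exp_l2norm_add_le hθ hK (hP.gap_nonneg t ω)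
    (fun q => by exact_mod_cast hP.arrival_nonneg t q ω)
    (fun q => by exact_mod_cast hP.arrival_le_one t q ω)
    (fun q => by rcases hu q with h | h <;> simp [h])
    (fun q => by rcases hu q with h | h <;> simp [h])
    (hP.policy.inv_mul_sum_gap_sub_le (hP.arrival_nonneg t · ω) (hP.arrival_le_one t · ω))

lemma integral_lyapunov_succ_le [IsProbabilityMeasure μ] (hP : IsMSLSSProcess μ N ℓ lam0 x π u d)
    (hlam0 : 0 ≤ lam0) {θ γ K : ℝ} (hθ : 0 ≤ θ) (hγ : 0 ≤ γ)
    (hload : Real.exp (θ * Fintype.card (VOQ N)) * lam0 ≤ 1 / N - γ) (hK : 0 < K)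
    (hKc : 2 * (N + Fintype.card (VOQ N) / 2) ≤ γ * K) (t : ℕ) :
    ∫ ω, lyapunov θ ℓ (d (t + 1) ω) ∂μ ≤
      Real.exp (-(θ * γ / 2)) * ∫ ω, lyapunov θ ℓ (d t ω) ∂μ +
        Real.exp (θ * (K + √(Fintype.card (VOQ N)))) := by
  calc ∫ ω, lyapunov θ ℓ (d (t + 1) ω) ∂μ
      ≤ ∫ ω, (driftBase θ (1 / N) N K (gap ℓ (d t ω)) +
          lam0 * ∑ q, driftSlope θ (1 / N) N K (gap ℓ (d t ω)) q) ∂μ :=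
        integral_le_of_le_add_sum_mul (hP.integrable_comp _ _)
          (hP.integrable_comp t fun dv => driftBase θ (1 / N) N K (gap ℓ dv))
          (fun q => hP.integrable_comp t fun dv => driftSlope θ (1 / N) N K (gap ℓ dv) q)
          (hP.integrable_arrival t)
          (fun q => (hP.indepFun t q).comp
            (measurable_of_countable fun dv => driftSlope θ (1 / N) N K (gap ℓ dv) q)
            (measurable_of_countable fun z : ℤ => (z : ℝ)))
          (hP.integral_arrival hlam0 t) (hP.lyapunov_succ_le hθ hK t)
    _ ≤ ∫ ω, (Real.exp (-(θ * γ / 2)) * lyapunov θ ℓ (d t ω) +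
          Real.exp (θ * (K + √(Fintype.card (VOQ N))))) ∂μ :=
        integral_mono (hP.integrable_comp t fun dv => driftBase θ (1 / N) N K (gap ℓ dv) +
            lam0 * ∑ q, driftSlope θ (1 / N) N K (gap ℓ dv) q)
          (hP.integrable_comp t fun dv => Real.exp (-(θ * γ / 2)) * lyapunov θ ℓ dv +
            Real.exp (θ * (K + √(Fintype.card (VOQ N))))) fun ω =>
          driftBase_add_mul_sum_driftSlope_le hθ hγ hload hK hKc (hP.gap_nonneg t ω)
    _ = _ := by
        rw [integral_add ((hP.integrable_comp t _).const_mul _) (integrable_const _),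
          integral_const_mul, integral_const]
        simp

lemma exists_integral_lyapunov_le [IsProbabilityMeasure μ]
    (hP : IsMSLSSProcess μ N ℓ lam0 x π u d) (hlam0 : 0 < lam0) (hadm : (N : ℝ) * lam0 < 1) :
    ∃ θ > 0, ∃ M, ∀ t, ∫ ω, lyapunov θ ℓ (d t ω) ∂μ ≤ M := by
  have hN : (0 : ℝ) < N := by exact_mod_cast NeZero.pos N
  obtain ⟨θ, hθ, γ, hγ, hload⟩ := exists_exp_mul_le_sub (m := Fintype.card (VOQ N)) (σ := 1 / N)
    (Nat.cast_pos.2 Fintype.card_pos) hlam0 (by rw [lt_div_iff₀ hN]; linarith)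
  have hK : 0 < 2 * (N + Fintype.card (VOQ N) / 2 : ℝ) / γ := by positivity
  obtain ⟨M, hM⟩ := bddAbove_range_of_le_mul_add (a := fun t => ∫ ω, lyapunov θ ℓ (d t ω) ∂μ)
    (Real.exp_pos _).le (Real.exp_lt_one_iff.2 (neg_lt_zero.2 (by positivity)))
    (hP.integral_lyapunov_succ_le hlam0.le hθ.le hγ.le hload hK (mul_div_cancel₀ _ hγ.ne').ge)
  exact ⟨θ, hθ, M, fun t => hM ⟨t, rfl⟩⟩

lemma sub_integral_lyapunov_div_le [IsProbabilityMeasure μ]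
    (hP : IsMSLSSProcess μ N ℓ lam0 x π u d) {θ : ℝ} (hθ : 0 < θ) (t : ℕ) (q : VOQ N) :
    ℓ - (∫ ω, lyapunov θ ℓ (d t ω) ∂μ) / θ ≤ ∫ ω, (d t ω q : ℝ) ∂μ :=
  calc (ℓ : ℝ) - (∫ ω, lyapunov θ ℓ (d t ω) ∂μ) / θ
      = ∫ ω, (ℓ - lyapunov θ ℓ (d t ω) / θ) ∂μ := by
        rw [integral_sub (integrable_const _) ((hP.integrable_comp t _).div_const θ),
          integral_const, integral_div]
        simp
    _ ≤ ∫ ω, (d t ω q : ℝ) ∂μ :=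
        integral_mono (hP.integrable_comp t fun dv => ℓ - lyapunov θ ℓ dv / θ)
          (hP.integrable_comp t fun dv => (dv q : ℝ)) fun ω => sub_lyapunov_div_le hθ _ q

end IsMSLSSProcess
end Switch

theorem stmt10_general
    {Ω : Type*} [MeasurableSpace Ω] (μ : Measure Ω) [IsProbabilityMeasure μ]
    (N : ℕ) [NeZero N] (ℓ : ℕ)
    (lam0 : ℝ) (hlam0 : 0 < lam0) (hadm : (N : ℝ) * lam0 < 1)
    (x : ℕ → VOQ N → Ω → ℤ)
    (hx01 : ∀ t q ω, x t q ω = 0 ∨ x t q ω = 1)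
    (hxmeas : ∀ t q, Measurable (x t q))
    (hxindep : iIndepFun (fun p : ℕ × VOQ N => x p.1 p.2) μ)
    (hxlaw : ∀ t q, μ {ω | x t q ω = 1} = ENNReal.ofReal lam0)
    (π : Equiv.Perm (Fin N))
    (u : (VOQ N → ℤ) → (VOQ N → ℤ) → (VOQ N → ℤ))
    (hMSLSS : ∀ dv xv : VOQ N → ℤ, ∃ k < N,
      (∀ k' < N,
        ipZ N (dv - xv) (confShift N k π) ≤ ipZ N (dv - xv) (confShift N k' π)) ∧
      u dv xv = fun q => if (ℓ : ℤ) ≤ dv q - xv q then 0 else confShift N k π q)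
    (d : ℕ → Ω → VOQ N → ℤ)
    (hd0 : ∀ ω, d 0 ω = 0)
    (hdrec : ∀ t ω, d (t + 1) ω =
      d t ω + u (d t ω) (fun q => x t q ω) - fun q => x t q ω) :
    ∀ q : VOQ N,
      ⊥ < Filter.liminf
        (fun t : ℕ => ((∫ ω, ((d t ω q : ℝ)) ∂μ : ℝ) : EReal)) Filter.atTop := by
  have hP : Switch.IsMSLSSProcess μ N ℓ lam0 x π u d :=
    ⟨hx01, hxmeas, hxindep, hxlaw, hMSLSS, hd0, hdrec⟩
  obtain ⟨θ, hθ, M, hM⟩ := hP.exists_integral_lyapunov_le hlam0 hadm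
  intro q
  refine bot_lt_liminf_of_forall_le (c := ℓ - M / θ) fun t => ?_
  calc (ℓ : ℝ) - M / θ ≤ ℓ - (∫ ω, Switch.lyapunov θ ℓ (d t ω) ∂μ) / θ := by
        gcongr; exact hM t
    _ ≤ ∫ ω, (d t ω q : ℝ) ∂μ := hP.sub_integral_lyapunov_div_le hθ t q

/-- **Theorem (admissibility of MSL(ℓ)-SS under uniform loads).** For a uniform admissible
i.i.d. load (`λ_q = λ₀` with `N·λ₀ < 1`) on an `N×N` switch (`N ≥ 1`), and any choice of
generator permutation `π` (hence any operational configuration subset `S_π`), the deviation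
process generated from `d⁰ = 0` by any measurable MSL(ℓ)-SS policy on `S_π` satisfies
`liminf_{t→∞} E[d_q^t] > −∞` for every VOQ `q`. -/
theorem stmt10
    {Ω : Type*} [MeasurableSpace Ω] (μ : Measure Ω) [IsProbabilityMeasure μ]
    (N : ℕ) [NeZero N] (ℓ : ℕ)
    (lam0 : ℝ) (hlam0 : 0 < lam0) (hadm : (N : ℝ) * lam0 < 1)
    (x : ℕ → VOQ N → Ω → ℤ)
    (hx01 : ∀ t q ω, x t q ω = 0 ∨ x t q ω = 1)
    (hxmeas : ∀ t q, Measurable (x t q))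
    (hxindep : iIndepFun (fun p : ℕ × VOQ N => x p.1 p.2) μ)
    (hxlaw : ∀ t q, μ {ω | x t q ω = 1} = ENNReal.ofReal lam0)
    (π : Equiv.Perm (Fin N))
    (u : (VOQ N → ℤ) → (VOQ N → ℤ) → (VOQ N → ℤ))
    (humeas : Measurable (Function.uncurry u))
    (hMSLSS : ∀ dv xv : VOQ N → ℤ, ∃ k < N,
      (∀ k' < N,
        ipZ N (dv - xv) (confShift N k π) ≤ ipZ N (dv - xv) (confShift N k' π)) ∧
      u dv xv = fun q => if (ℓ : ℤ) ≤ dv q - xv q then 0 else confShift N k π q)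
    (d : ℕ → Ω → VOQ N → ℤ)
    (hd0 : ∀ ω, d 0 ω = 0)
    (hdrec : ∀ t ω, d (t + 1) ω =
      d t ω + u (d t ω) (fun q => x t q ω) - fun q => x t q ω) :
    ∀ q : VOQ N,
      ⊥ < Filter.liminf
        (fun t : ℕ => ((∫ ω, ((d t ω q : ℝ)) ∂μ : ℝ) : EReal)) Filter.atTop :=
  stmt10_general μ N ℓ lam0 hlam0 hadm x hx01 hxmeas hxindep hxlaw π u hMSLSS d hd0 hdrec
end

section
/- Deterministic drift bound for MSL(ℓ): let N ≥ 1, ℓ ∈ ℕ, d ∈ ℤ^{Fin N × Fin N}, x ∈ {0,1}^{Fin N × Fin N}, and let λ = Σ_π α_π v_π with α_π ≥ 0 and Σ_π α_π = α < 1. Let v* minimize ⟨d − x, v⟩ over the set 𝒱 of all configuration vectors, and let v̄ be obtained from v* by setting to 0 every coordinate q with d_q − x_q ≥ ℓ. Then 2⟨d, v̄⟩ − 2⟨d, λ⟩ + ⟨v̄, v̄⟩ − 2⟨λ, v̄⟩ + ⟨λ, 1⟩ ≤ (2(1−α)/N)·⟨d, 1⟩ + N·(3 + α). -/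
open Finset

/-- **Deterministic drift bound for MSL(ℓ).** Let `N ≥ 1`, `ℓ ∈ ℕ`, `d ∈ ℤ^{VOQ N}`,
`x ∈ {0,1}^{VOQ N}`, and `λ = Σ_π α_π v_π` with `α_π ≥ 0` and `Σ_π α_π = α < 1`. Let `v*`
minimize `⟨d − x, v⟩` over all configuration vectors and let `v̄` be obtained from `v*` by
zeroing every coordinate `q` with `d_q − x_q ≥ ℓ`. Then
`2⟨d,v̄⟩ − 2⟨d,λ⟩ + ⟨v̄,v̄⟩ − 2⟨λ,v̄⟩ + ⟨λ,1⟩ ≤ (2(1−α)/N)·⟨d,1⟩ + N·(3+α)`. -/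
theorem stmt19
    (N : ℕ) (hN : 1 ≤ N) (ℓ : ℕ)
    (d x : VOQ N → ℤ)
    (hx : ∀ q, x q = 0 ∨ x q = 1)
    (α : Equiv.Perm (Fin N) → ℝ)
    (hα : ∀ π, 0 ≤ α π)
    (a : ℝ) (ha : a = ∑ π : Equiv.Perm (Fin N), α π) (ha1 : a < 1)
    (lam : VOQ N → ℝ)
    (hlamBV : ∀ q, lam q = ∑ π : Equiv.Perm (Fin N), α π * (confVec N π q : ℝ))
    (πs : Equiv.Perm (Fin N))
    (hmin : ∀ π : Equiv.Perm (Fin N),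
      ipZ N (d - x) (confVec N πs) ≤ ipZ N (d - x) (confVec N π))
    (vb : VOQ N → ℤ)
    (hvb : ∀ q, vb q = if (ℓ : ℤ) ≤ d q - x q then 0 else confVec N πs q) :
    2 * (ipZ N d vb : ℝ) - 2 * (∑ q, (d q : ℝ) * lam q) + (ipZ N vb vb : ℝ)
        - 2 * (∑ q, lam q * (vb q : ℝ)) + ∑ q, lam q ≤
      (2 * (1 - a) / (N : ℝ)) * ∑ q, (d q : ℝ) + (N : ℝ) * (3 + a) := by
  haveI : NeZero N := ⟨by omega⟩
  have hNpos : (0:ℝ) < N := by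
    have : 0 < N := by omega
    exact_mod_cast this
  have hconf0 : ∀ (π : Equiv.Perm (Fin N)) q, (0:ℤ) ≤ confVec N π q := by
    intro π q; unfold confVec; split <;> norm_num
  have hconf1 : ∀ (π : Equiv.Perm (Fin N)) q, confVec N π q ≤ 1 := by
    intro π q; unfold confVec; split <;> norm_num
  have hconfsum : ∀ π : Equiv.Perm (Fin N), ∑ q, confVec N π q = N := by
    intro π
    rw [Fintype.sum_prod_type]
    simp [confVec, Finset.sum_ite_eq']
  have hxle : ∀ q, 0 ≤ x q ∧ x q ≤ 1 := fun q => by rcases hx q with h | h <;> simp [h]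
  -- split lemma
  have hsplit : ∀ π : Equiv.Perm (Fin N),
      ipZ N d (confVec N π) = ipZ N (d - x) (confVec N π) + ipZ N x (confVec N π) := by
    intro π
    simp only [ipZ, Pi.sub_apply, sub_mul, ← Finset.sum_add_distrib]
    exact Finset.sum_congr rfl fun q _ => by ring
  have hxip : ∀ π : Equiv.Perm (Fin N), 0 ≤ ipZ N x (confVec N π) :=
    fun π => Finset.sum_nonneg fun q _ => mul_nonneg (hxle q).1 (hconf0 π q)
  -- key combinatorial averaging bound
  have hsum : ∑ k : Fin N, ipZ N (d - x) (confVec N (Equiv.addRight k)) = ∑ q, (d - x) q := by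
    simp only [ipZ]
    rw [Finset.sum_comm]
    refine Finset.sum_congr rfl fun q _ => ?_
    rcases q with ⟨i, j⟩
    have : ∀ k : Fin N, (d - x) (i, j) * confVec N (Equiv.addRight k) (i, j)
        = if k = j - i then (d - x) (i, j) else 0 := by
      intro k
      have hc : ((i, j).2 = Equiv.addRight k (i, j).1) ↔ (k = j - i) := by
        simp only [Equiv.coe_addRight]
        constructor
        · intro h; rw [h]; simp
        · intro h; rw [h]; simp
      simp only [confVec, mul_ite, mul_one, mul_zero]
      rw [if_congr hc rfl rfl]
    simp only [this]
    simp
  have hmin' : (N:ℤ) * ipZ N (d - x) (confVec N πs) ≤ ∑ q, (d - x) q := by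
    calc (N:ℤ) * ipZ N (d - x) (confVec N πs)
        = ∑ _k : Fin N, ipZ N (d - x) (confVec N πs) := by
          simp [Finset.sum_const, mul_comm]
      _ ≤ ∑ k : Fin N, ipZ N (d - x) (confVec N (Equiv.addRight k)) :=
          Finset.sum_le_sum fun k _ => hmin _
      _ = ∑ q, (d - x) q := hsum
  -- h1
  have hdvb : ipZ N d vb ≤ ipZ N (d - x) (confVec N πs) + N := by
    have s1 : ipZ N d vb ≤ ipZ N d (confVec N πs) := by
      apply Finset.sum_le_sum; intro q _
      rw [hvb q]; split
      · rename_i h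
        have hl : (0:ℤ) ≤ (ℓ:ℤ) := Int.natCast_nonneg _
        have hd : 0 ≤ d q := by linarith [(hxle q).1]
        simpa using mul_nonneg hd (hconf0 πs q)
      · exact le_refl _
    have s3 : ipZ N x (confVec N πs) ≤ N := by
      calc ipZ N x (confVec N πs) ≤ ∑ q, confVec N πs q := by
            apply Finset.sum_le_sum; intro q _
            nlinarith [(hxle q).1, (hxle q).2, hconf0 πs q, hconf1 πs q]
        _ = N := hconfsum πs
    have := hsplit πs
    linarith
  -- h3
  have hvb01 : ∀ q, vb q = 0 ∨ vb q = 1 := by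
    intro q; rw [hvb q]; split
    · exact Or.inl rfl
    · unfold confVec; split
      · exact Or.inr rfl
      · exact Or.inl rfl
  have hvble : ∀ q, vb q ≤ confVec N πs q := by
    intro q; rw [hvb q]; split
    · exact hconf0 πs q
    · exact le_refl _
  have h3 : ipZ N vb vb ≤ (N:ℤ) := by
    calc ipZ N vb vb = ∑ q, vb q := by
          simp only [ipZ]
          exact Finset.sum_congr rfl fun q _ => by rcases hvb01 q with h | h <;> simp [h]
      _ ≤ ∑ q, confVec N πs q := Finset.sum_le_sum fun q _ => hvble q
      _ = N := hconfsum πs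
  -- real-side facts
  have hconfsumR : ∀ π : Equiv.Perm (Fin N), ∑ q, (confVec N π q : ℝ) = N := by
    intro π; exact_mod_cast hconfsum π
  have h5 : ∑ q, lam q = a * N := by
    calc ∑ q, lam q = ∑ q, ∑ π : Equiv.Perm (Fin N), α π * (confVec N π q : ℝ) :=
          Finset.sum_congr rfl fun q _ => hlamBV q
      _ = ∑ π : Equiv.Perm (Fin N), ∑ q, α π * (confVec N π q : ℝ) := Finset.sum_comm
      _ = ∑ π : Equiv.Perm (Fin N), α π * N := by
          refine Finset.sum_congr rfl fun π _ => ?_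
          rw [← Finset.mul_sum, hconfsumR]
      _ = a * N := by rw [ha, Finset.sum_mul]
  have hMle : ∀ π : Equiv.Perm (Fin N),
      (ipZ N (d - x) (confVec N πs) : ℝ) ≤ (ipZ N d (confVec N π) : ℝ) := by
    intro π
    have h1 := hmin π
    have h2 := hsplit π
    have h3' := hxip π
    have : ipZ N (d - x) (confVec N πs) ≤ ipZ N d (confVec N π) := by linarith
    exact_mod_cast this
  have h2 : a * (ipZ N (d - x) (confVec N πs) : ℝ) ≤ ∑ q, (d q : ℝ) * lam q := by
    have e : ∑ q, (d q : ℝ) * lam q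
        = ∑ π : Equiv.Perm (Fin N), α π * (ipZ N d (confVec N π) : ℝ) := by
      calc ∑ q, (d q : ℝ) * lam q
          = ∑ q, ∑ π : Equiv.Perm (Fin N), α π * ((d q : ℝ) * (confVec N π q : ℝ)) := by
            refine Finset.sum_congr rfl fun q _ => ?_
            rw [hlamBV q, Finset.mul_sum]
            exact Finset.sum_congr rfl fun π _ => by ring
        _ = ∑ π : Equiv.Perm (Fin N), ∑ q, α π * ((d q : ℝ) * (confVec N π q : ℝ)) :=
            Finset.sum_comm
        _ = ∑ π : Equiv.Perm (Fin N), α π * (ipZ N d (confVec N π) : ℝ) := by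
            refine Finset.sum_congr rfl fun π _ => ?_
            rw [← Finset.mul_sum]
            congr 1
            simp [ipZ]
    rw [e, ha, Finset.sum_mul]
    exact Finset.sum_le_sum fun π _ => mul_le_mul_of_nonneg_left (hMle π) (hα π)
  have hlam0 : ∀ q, 0 ≤ lam q := fun q => by
    rw [hlamBV q]
    exact Finset.sum_nonneg fun π _ => mul_nonneg (hα π) (by exact_mod_cast hconf0 π q)
  have h4 : 0 ≤ ∑ q, lam q * (vb q : ℝ) :=
    Finset.sum_nonneg fun q _ => mul_nonneg (hlam0 q)
      (by rcases hvb01 q with h | h <;> simp [h])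
  have hNM : (N:ℝ) * (ipZ N (d - x) (confVec N πs) : ℝ) ≤ ∑ q, (d q : ℝ) := by
    have hxs : 0 ≤ ∑ q, x q := Finset.sum_nonneg fun q _ => (hxle q).1
    have hsub : ∑ q, (d - x) q = ∑ q, d q - ∑ q, x q := by
      simp [Finset.sum_sub_distrib]
    have : (N:ℤ) * ipZ N (d - x) (confVec N πs) ≤ ∑ q, d q := by
      rw [hsub] at hmin'; linarith
    exact_mod_cast this
  set M : ℝ := (ipZ N (d - x) (confVec N πs) : ℝ) with hM
  have ha0 : 0 ≤ 1 - a := by linarith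
  have hmain : 2 * (1 - a) * M ≤ 2 * (1 - a) / N * ∑ q, (d q : ℝ) := by
    rw [div_mul_eq_mul_div, le_div_iff₀ hNpos]
    nlinarith [hNM, ha0]
  have h1R : (ipZ N d vb : ℝ) ≤ M + N := by rw [hM]; exact_mod_cast hdvb
  have h3R : (ipZ N vb vb : ℝ) ≤ N := by exact_mod_cast h3
  nlinarith [h1R, h2, h3R, h4, h5, hmain, ha0]
end
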